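/- arXiv:1604.08469 — 4 statements merged into one kernel-verified Lean document; each statement's English description precedes it below -/
import Mathlib

section
/- Let q be a prime power and let U, V, W ⊆ F_q^* be sets of cardinalities U, V, W respectively. Then |N(U,V,W) − U²V²W²/(q−1)| ≤ q·U·V·W. -/
/-- `N(U,V,W)`: the number of solutions `(u₁,u₂,v₁,v₂,w₁,w₂) ∈ U²×V²×W²` of
`u₁(v₁ − w₁) = u₂(v₂ − w₂)`. -/
def Ncount {F : Type*} [Field F] [DecidableEq F] (U V W : Finset F) : ℕ :=
  (((U ×ˢ U) ×ˢ (V ×ˢ V) ×ˢ (W ×ˢ W)).filter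
    (fun t => t.1.1 * (t.2.1.1 - t.2.2.1) = t.1.2 * (t.2.1.2 - t.2.2.2))).card

open Finset Complex

section Aux
set_option linter.unusedSectionVars false

lemma mul_expand {α : Type*} [DecidableEq α] (A : Finset α) (f g : α → ℂ) :
    (∑ a ∈ A, f a) * (∑ a ∈ A, g a) = ∑ p ∈ A ×ˢ A, f p.1 * g p.2 := by
  rw [Finset.sum_mul_sum, Finset.sum_product]

lemma sixfold {F : Type*} [DecidableEq F] (A B C : Finset F) (f g : F → F → F → ℂ) :
    ∑ p ∈ A ×ˢ A, ∑ r ∈ B ×ˢ B, ∑ s ∈ C ×ˢ C, f p.1 r.1 s.1 * g p.2 r.2 s.2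
      = (∑ a ∈ A, ∑ b ∈ B, ∑ c ∈ C, f a b c) * (∑ a ∈ A, ∑ b ∈ B, ∑ c ∈ C, g a b c) := by
  rw [mul_expand]
  refine Finset.sum_congr rfl fun p _ => ?_
  rw [mul_expand]
  refine Finset.sum_congr rfl fun r _ => ?_
  rw [mul_expand]

variable {F : Type*} [Field F] [Fintype F] [DecidableEq F]

noncomputable instance : Fintype (MulChar F ℂ) := Fintype.ofFinite _

variable {F : Type*} [Field F] [Fintype F] [DecidableEq F]

noncomputable instance inst_s12 : Fintype (MulChar F ℂ) := Fintype.ofFinite _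

lemma sum_chars (a : F) :
    ∑ χ : MulChar F ℂ, χ a = if a = 1 then ((Fintype.card F : ℂ) - 1) else 0 := by
  split_ifs with ha
  · subst ha
    simp only [map_one, Finset.sum_const, Finset.card_univ, nsmul_eq_mul, mul_one]
    have h1 : Nat.card (MulChar F ℂ) = Nat.card Fˣ :=
      MulChar.card_eq_card_units_of_hasEnoughRootsOfUnity F ℂ
    rw [← Nat.card_eq_fintype_card, h1, Nat.card_eq_fintype_card, Fintype.card_units]
    have : (1 : ℕ) ≤ Fintype.card F := Fintype.card_pos
    push_cast [Nat.cast_sub this]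
    ring
  · rcases eq_or_ne a 0 with rfl | h0
    · simp [MulChar.map_zero]
    · obtain ⟨χ, hχ⟩ := MulChar.exists_apply_ne_one_of_hasEnoughRootsOfUnity F ℂ ha
      refine eq_zero_of_mul_eq_self_left hχ ?_
      simp only [Finset.mul_sum, ← MulChar.mul_apply]
      exact Fintype.sum_bijective _ (Group.mulLeft_bijective χ) _ _ fun χ' ↦ rfl

lemma sum_chars_pair (a b : F) :
    ∑ χ : MulChar F ℂ, χ a * χ⁻¹ b =
      if a = b ∧ b ≠ 0 then ((Fintype.card F : ℂ) - 1) else 0 := by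
  rcases eq_or_ne b 0 with rfl | hb
  · simp [MulChar.map_zero]
  · have h : ∀ χ : MulChar F ℂ, χ a * χ⁻¹ b = χ (a * b⁻¹) := fun χ => by
      rw [MulChar.inv_apply, Ring.inverse_eq_inv, map_mul]
    simp_rw [h, sum_chars]
    have : a * b⁻¹ = 1 ↔ a = b := mul_inv_eq_one₀ hb
    by_cases hab : a = b <;> simp [this, hab, hb]

lemma card_sub_one_ne : ((Fintype.card F : ℂ) - 1) ≠ 0 := by
  have h2 : 2 ≤ Fintype.card F := Fintype.one_lt_card
  have : (Fintype.card F : ℂ) ≠ 1 := by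
    intro h
    have := Nat.cast_injective (R := ℂ) (by exact_mod_cast h : ((Fintype.card F : ℕ) : ℂ) = ((1:ℕ):ℂ))
    omega
  exact sub_ne_zero.mpr this

lemma indicator_eq (a b : F) :
    (if a = b then (1:ℂ) else 0) =
      ((Fintype.card F : ℂ) - 1)⁻¹ * ∑ χ : MulChar F ℂ, χ a * χ⁻¹ b +
        (if a = 0 then (1:ℂ) else 0) * (if b = 0 then (1:ℂ) else 0) := by
  rw [sum_chars_pair]
  rcases eq_or_ne b 0 with rfl | hb
  · by_cases ha : a = 0 <;> simp [ha]
  · have : ¬ (a = 0 ∧ b = 0) := by tauto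
    by_cases hab : a = b <;>
      simp [hab, hb, inv_mul_cancel₀ (card_sub_one_ne (F := F))]

noncomputable def Schar (U : Finset F) (χ : MulChar F ℂ) : ℂ := ∑ u ∈ U, χ u
noncomputable def Bchar (V W : Finset F) (χ : MulChar F ℂ) : ℂ :=
  ∑ v ∈ V, ∑ w ∈ W, χ (v - w)

lemma schar_mul_bchar (U V W : Finset F) (χ : MulChar F ℂ) :
    Schar U χ * Bchar V W χ = ∑ u ∈ U, ∑ v ∈ V, ∑ w ∈ W, χ (u * (v - w)) := by
  rw [Schar, Bchar, Finset.sum_mul]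
  refine Finset.sum_congr rfl fun u _ => ?_
  rw [Finset.mul_sum]
  refine Finset.sum_congr rfl fun v _ => ?_
  rw [Finset.mul_sum]
  exact Finset.sum_congr rfl fun w _ => (map_mul χ u (v - w)).symm

lemma conj_schar_mul_bchar (U V W : Finset F) (χ : MulChar F ℂ) :
    (starRingEnd ℂ) (Schar U χ * Bchar V W χ)
      = ∑ u ∈ U, ∑ v ∈ V, ∑ w ∈ W, χ⁻¹ (u * (v - w)) := by
  rw [schar_mul_bchar, map_sum]
  refine Finset.sum_congr rfl fun u _ => ?_
  rw [map_sum]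
  refine Finset.sum_congr rfl fun v _ => ?_
  rw [map_sum]
  exact Finset.sum_congr rfl fun w _ => MulChar.star_apply' χ _

lemma zero_count (U V W : Finset F) (hU : ∀ u ∈ U, u ≠ 0) :
    (∑ u ∈ U, ∑ v ∈ V, ∑ w ∈ W, (if u * (v - w) = 0 then (1:ℂ) else 0))
      = (U.card : ℂ) * ((V ∩ W).card : ℂ) := by
  have : ∀ u ∈ U, (∑ v ∈ V, ∑ w ∈ W, (if u * (v - w) = 0 then (1:ℂ) else 0))
      = ((V ∩ W).card : ℂ) := by
    intro u hu
    have h : ∀ v ∈ V, ∀ w ∈ W, (if u * (v - w) = 0 then (1:ℂ) else 0)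
        = (if w = v then (1:ℂ) else 0) := by
      intro v _ w _
      have : (u * (v - w) = 0) ↔ (w = v) := by
        rw [mul_eq_zero, sub_eq_zero]
        simp [hU u hu, eq_comm]
      simp [this]
    calc ∑ v ∈ V, ∑ w ∈ W, (if u * (v - w) = 0 then (1:ℂ) else 0)
        = ∑ v ∈ V, ∑ w ∈ W, (if w = v then (1:ℂ) else 0) := by
          refine Finset.sum_congr rfl fun v hv => Finset.sum_congr rfl fun w hw => h v hv w hw
      _ = ∑ v ∈ V, (if v ∈ W then (1:ℂ) else 0) := by
          refine Finset.sum_congr rfl fun v hv => ?_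
          rw [Finset.sum_ite_eq' W v (fun _ => (1:ℂ))]
      _ = ((V ∩ W).card : ℂ) := by
          rw [Finset.sum_ite_mem V W (fun _ => (1:ℂ))]
          simp
  rw [Finset.sum_congr rfl this, Finset.sum_const, nsmul_eq_mul]

lemma main_identity (U V W : Finset F) (hU : ∀ u ∈ U, u ≠ 0) :
    (Ncount U V W : ℂ) =
      ((Fintype.card F : ℂ) - 1)⁻¹ *
        ∑ χ : MulChar F ℂ, (Schar U χ * Bchar V W χ) *
           (starRingEnd ℂ) (Schar U χ * Bchar V W χ) +
        ((U.card : ℂ) * ((V ∩ W).card : ℂ)) ^ 2 := by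
  have h1 : (Ncount U V W : ℂ)
      = ∑ p ∈ U ×ˢ U, ∑ r ∈ V ×ˢ V, ∑ s ∈ W ×ˢ W,
          (if p.1 * (r.1 - s.1) = p.2 * (r.2 - s.2) then (1:ℂ) else 0) := by
    rw [Ncount, Finset.card_filter]
    push_cast
    rw [Finset.sum_product]
    exact Finset.sum_congr rfl fun p _ => by rw [Finset.sum_product]
  rw [h1]
  rw [Finset.sum_congr rfl fun p _ => Finset.sum_congr rfl fun r _ =>
    Finset.sum_congr rfl fun s _ => indicator_eq (p.1 * (r.1 - s.1)) (p.2 * (r.2 - s.2))]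
  simp only [Finset.sum_add_distrib]
  congr 1
  · -- character part
    calc ∑ p ∈ U ×ˢ U, ∑ r ∈ V ×ˢ V, ∑ s ∈ W ×ˢ W,
          ((Fintype.card F : ℂ) - 1)⁻¹ *
            ∑ χ : MulChar F ℂ, χ (p.1 * (r.1 - s.1)) * χ⁻¹ (p.2 * (r.2 - s.2))
        = ((Fintype.card F : ℂ) - 1)⁻¹ * ∑ p ∈ U ×ˢ U, ∑ r ∈ V ×ˢ V, ∑ s ∈ W ×ˢ W,
            ∑ χ : MulChar F ℂ, χ (p.1 * (r.1 - s.1)) * χ⁻¹ (p.2 * (r.2 - s.2)) := by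
          rw [Finset.mul_sum]
          refine Finset.sum_congr rfl fun p _ => ?_
          rw [Finset.mul_sum]
          refine Finset.sum_congr rfl fun r _ => ?_
          rw [Finset.mul_sum]
      _ = ((Fintype.card F : ℂ) - 1)⁻¹ * ∑ χ : MulChar F ℂ,
            ∑ p ∈ U ×ˢ U, ∑ r ∈ V ×ˢ V, ∑ s ∈ W ×ˢ W,
              χ (p.1 * (r.1 - s.1)) * χ⁻¹ (p.2 * (r.2 - s.2)) := by
          congr 1
          refine Eq.symm ?_
          calc ∑ χ : MulChar F ℂ, ∑ p ∈ U ×ˢ U, ∑ r ∈ V ×ˢ V, ∑ s ∈ W ×ˢ W,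
                χ (p.1 * (r.1 - s.1)) * χ⁻¹ (p.2 * (r.2 - s.2))
              = ∑ p ∈ U ×ˢ U, ∑ χ : MulChar F ℂ, ∑ r ∈ V ×ˢ V, ∑ s ∈ W ×ˢ W,
                χ (p.1 * (r.1 - s.1)) * χ⁻¹ (p.2 * (r.2 - s.2)) := Finset.sum_comm
            _ = ∑ p ∈ U ×ˢ U, ∑ r ∈ V ×ˢ V, ∑ χ : MulChar F ℂ, ∑ s ∈ W ×ˢ W,
                χ (p.1 * (r.1 - s.1)) * χ⁻¹ (p.2 * (r.2 - s.2)) :=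
                Finset.sum_congr rfl fun p _ => Finset.sum_comm
            _ = ∑ p ∈ U ×ˢ U, ∑ r ∈ V ×ˢ V, ∑ s ∈ W ×ˢ W, ∑ χ : MulChar F ℂ,
                χ (p.1 * (r.1 - s.1)) * χ⁻¹ (p.2 * (r.2 - s.2)) :=
                Finset.sum_congr rfl fun p _ => Finset.sum_congr rfl fun r _ =>
                  Finset.sum_comm
      _ = ((Fintype.card F : ℂ) - 1)⁻¹ *
            ∑ χ : MulChar F ℂ, (Schar U χ * Bchar V W χ) *
              (starRingEnd ℂ) (Schar U χ * Bchar V W χ) := by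
          congr 1
          refine Finset.sum_congr rfl fun χ _ => ?_
          rw [conj_schar_mul_bchar, schar_mul_bchar,
            sixfold U V W (fun u v w => χ (u * (v - w))) (fun u v w => χ⁻¹ (u * (v - w)))]
  · -- zero part
    rw [sixfold U V W (fun u v w => if u * (v - w) = 0 then (1:ℂ) else 0)
        (fun u v w => if u * (v - w) = 0 then (1:ℂ) else 0),
      zero_count U V W hU, sq]

lemma chi_mul_inv_self (χ : MulChar F ℂ) (c : F) :
    χ c * χ⁻¹ c = if c = 0 then 0 else 1 := by
  rcases eq_or_ne c 0 with rfl | hc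
  · simp [MulChar.map_zero]
  · rw [MulChar.inv_apply_eq_inv', if_neg hc, mul_inv_cancel₀]
    exact (hc.isUnit.map χ).ne_zero

lemma ratio_sum (χ : MulChar F ℂ) (hχ : χ ≠ 1) {a b : F} (hab : a ≠ b) :
    ∑ x : F, χ (a - x) * χ⁻¹ (b - x) = -1 := by
  have hba : a - b ≠ 0 := sub_ne_zero.mpr hab
  have hpt : ∀ x : F, χ (a - x) * χ⁻¹ (b - x) = χ ((a - x) * (b - x)⁻¹) := fun x => by
    rw [MulChar.inv_apply, Ring.inverse_eq_inv, map_mul]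
  simp_rw [hpt]
  rw [← Finset.sum_erase_add _ _ (mem_univ b)]
  have hzero : χ ((a - b) * (b - b)⁻¹) = 0 := by
    rw [sub_self, inv_zero, mul_zero, MulChar.map_zero]
  rw [hzero, add_zero]
  have key : ∑ x ∈ univ.erase b, χ ((a - x) * (b - x)⁻¹)
      = ∑ t ∈ univ.erase 1, χ t := by
    refine Finset.sum_nbij' (fun x => (a - x) * (b - x)⁻¹)
      (fun t => (t * b - a) * (t - 1)⁻¹) ?_ ?_ ?_ ?_ ?_
    · intro x hx
      have hbx : b - x ≠ 0 := sub_ne_zero.mpr (Ne.symm (Finset.mem_erase.mp hx).1)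
      refine Finset.mem_erase.mpr ⟨?_, mem_univ _⟩
      intro h
      rw [mul_inv_eq_one₀ hbx] at h
      exact hab (sub_left_inj.mp h)
    · intro t ht
      have ht1' : t - 1 ≠ 0 := sub_ne_zero.mpr (Finset.mem_erase.mp ht).1
      refine Finset.mem_erase.mpr ⟨?_, mem_univ _⟩
      intro h
      apply hab
      field_simp at h
      linear_combination -h
    · intro x hx
      have hbx : b - x ≠ 0 := sub_ne_zero.mpr (Ne.symm (Finset.mem_erase.mp hx).1)
      have e1 : (a - x) * (b - x)⁻¹ - 1 = (a - b) * (b - x)⁻¹ := by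
        field_simp
        try ring
      have e2 : (a - x) * (b - x)⁻¹ * b - a = x * ((a - b) * (b - x)⁻¹) := by
        field_simp
        try ring
      simp only [e1, e2]
      rw [mul_assoc, mul_inv_cancel₀ (mul_ne_zero hba (inv_ne_zero hbx)), mul_one]
    · intro t ht
      have ht1' : t - 1 ≠ 0 := sub_ne_zero.mpr (Finset.mem_erase.mp ht).1
      have e1 : a - (t * b - a) * (t - 1)⁻¹ = t * ((a - b) * (t - 1)⁻¹) := by
        field_simp
        try ring
      have e2 : b - (t * b - a) * (t - 1)⁻¹ = (a - b) * (t - 1)⁻¹ := by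
        field_simp
        try ring
      simp only [e1, e2]
      rw [mul_assoc, mul_inv_cancel₀ (mul_ne_zero hba (inv_ne_zero ht1')), mul_one]
    · intro x hx
      rfl
  rw [key]
  have h0 : (∑ t ∈ univ.erase 1, χ t) + χ 1 = ∑ t : F, χ t :=
    Finset.sum_erase_add _ _ (mem_univ 1)
  rw [MulChar.sum_eq_zero_of_ne_one hχ, map_one] at h0
  linear_combination h0

lemma conj_sum (A : Finset F) (χ : MulChar F ℂ) (f : F → F) :
    (starRingEnd ℂ) (∑ a ∈ A, χ (f a)) = ∑ a ∈ A, χ⁻¹ (f a) := by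
  rw [map_sum]
  exact Finset.sum_congr rfl fun a _ => MulChar.star_apply' χ _

lemma diag_count (A : Finset F) (c : ℂ) :
    (∑ p ∈ A ×ˢ A, if p.1 = p.2 then c else 0) = (A.card : ℂ) * c := by
  rw [Finset.sum_product]
  have : ∀ a ∈ A, (∑ b ∈ A, if a = b then c else 0) = c := fun a ha => by
    rw [Finset.sum_ite_eq A a (fun _ => c), if_pos ha]
  rw [Finset.sum_congr rfl this, Finset.sum_const, nsmul_eq_mul]

lemma schar_orth (U : Finset F) (hU : ∀ u ∈ U, u ≠ 0) :
    ∑ χ : MulChar F ℂ, Schar U χ * (starRingEnd ℂ) (Schar U χ)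
      = ((Fintype.card F : ℂ) - 1) * (U.card : ℂ) := by
  have h1 : ∀ χ : MulChar F ℂ, Schar U χ * (starRingEnd ℂ) (Schar U χ)
      = ∑ p ∈ U ×ˢ U, χ p.1 * χ⁻¹ p.2 := fun χ => by
    have hc : (starRingEnd ℂ) (∑ u ∈ U, χ u) = ∑ u ∈ U, χ⁻¹ u := by
      rw [map_sum]
      exact Finset.sum_congr rfl fun a _ => MulChar.star_apply' χ _
    rw [Schar, hc, mul_expand]
  simp_rw [h1]
  rw [Finset.sum_comm]
  have h2 : ∀ p ∈ U ×ˢ U, (∑ χ : MulChar F ℂ, χ p.1 * χ⁻¹ p.2)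
      = if p.1 = p.2 then ((Fintype.card F : ℂ) - 1) else 0 := by
    intro p hp
    rw [sum_chars_pair]
    have : p.2 ≠ 0 := hU p.2 (Finset.mem_product.mp hp).2
    simp [this]
  rw [Finset.sum_congr rfl h2, diag_count, mul_comm]

lemma diag_sum (χ : MulChar F ℂ) (a : F) :
    ∑ x : F, χ (a - x) * χ⁻¹ (a - x) = (Fintype.card F : ℂ) - 1 := by
  simp_rw [chi_mul_inv_self]
  have h : ∀ x : F, (if a - x = 0 then (0:ℂ) else 1) = 1 - (if x = a then 1 else 0) := by
    intro x
    have : a - x = 0 ↔ x = a := by rw [sub_eq_zero]; exact eq_comm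
    by_cases hx : x = a <;> simp [this, hx]
  simp_rw [h]
  rw [Finset.sum_sub_distrib, Finset.sum_const, Finset.sum_ite_eq' univ a (fun _ => (1:ℂ))]
  simp [Finset.card_univ]

lemma colsum (χ : MulChar F ℂ) (hχ : χ ≠ 1) (V : Finset F) :
    ∑ x : F, ((∑ v ∈ V, χ (v - x)) * (starRingEnd ℂ) (∑ v ∈ V, χ (v - x)))
      = (Fintype.card F : ℂ) * (V.card : ℂ) - (V.card : ℂ)^2 := by
  have h1 : ∀ x : F, (∑ v ∈ V, χ (v - x)) * (starRingEnd ℂ) (∑ v ∈ V, χ (v - x))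
      = ∑ p ∈ V ×ˢ V, χ (p.1 - x) * χ⁻¹ (p.2 - x) := fun x => by
    rw [conj_sum V χ (· - x), mul_expand]
  simp_rw [h1]
  rw [Finset.sum_comm]
  have h2 : ∀ p ∈ V ×ˢ V, (∑ x : F, χ (p.1 - x) * χ⁻¹ (p.2 - x))
      = ((Fintype.card F : ℂ) * (if p.1 = p.2 then 1 else 0) - 1) := by
    intro p _
    by_cases hp : p.1 = p.2
    · rw [hp, diag_sum, if_pos rfl, mul_one]
    · rw [ratio_sum χ hχ hp, if_neg hp, mul_zero]
      ring
  rw [Finset.sum_congr rfl h2, Finset.sum_sub_distrib, ← Finset.mul_sum, diag_count]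
  simp [Finset.card_product, sq]

lemma flip_pair (χ : MulChar F ℂ) (x c d : F) :
    χ (x - c) * χ⁻¹ (x - d) = χ (c - x) * χ⁻¹ (d - x) := by
  have hne : (-1 : F) ≠ 0 := by simp
  have h1 : x - c = -1 * (c - x) := by ring
  have h2 : x - d = -1 * (d - x) := by ring
  rw [h1, h2, map_mul, map_mul]
  have : χ (-1) * χ⁻¹ (-1) = 1 := by rw [chi_mul_inv_self, if_neg hne]
  calc χ (-1) * χ (c - x) * (χ⁻¹ (-1) * χ⁻¹ (d - x))
      = (χ (-1) * χ⁻¹ (-1)) * (χ (c - x) * χ⁻¹ (d - x)) := by ring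
    _ = χ (c - x) * χ⁻¹ (d - x) := by rw [this, one_mul]

lemma colsum2 (χ : MulChar F ℂ) (hχ : χ ≠ 1) (W : Finset F) :
    ∑ x : F, ((∑ w ∈ W, χ (x - w)) * (starRingEnd ℂ) (∑ w ∈ W, χ (x - w)))
      = (Fintype.card F : ℂ) * (W.card : ℂ) - (W.card : ℂ)^2 := by
  have h1 : ∀ x : F, (∑ w ∈ W, χ (x - w)) * (starRingEnd ℂ) (∑ w ∈ W, χ (x - w))
      = ∑ p ∈ W ×ˢ W, χ (p.1 - x) * χ⁻¹ (p.2 - x) := fun x => by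
    rw [conj_sum W χ (x - ·), mul_expand]
    exact Finset.sum_congr rfl fun p _ => flip_pair χ x p.1 p.2
  simp_rw [h1]
  rw [Finset.sum_comm]
  have h2 : ∀ p ∈ W ×ˢ W, (∑ x : F, χ (p.1 - x) * χ⁻¹ (p.2 - x))
      = ((Fintype.card F : ℂ) * (if p.1 = p.2 then 1 else 0) - 1) := by
    intro p _
    by_cases hp : p.1 = p.2
    · rw [hp, diag_sum, if_pos rfl, mul_one]
    · rw [ratio_sum χ hχ hp, if_neg hp, mul_zero]
      ring
  rw [Finset.sum_congr rfl h2, Finset.sum_sub_distrib, ← Finset.mul_sum, diag_count]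
  simp [Finset.card_product, sq]

lemma sq_abs_sum_le {α : Type*} (A : Finset α) (g : α → ℂ) (T : ℝ)
    (hT : ∑ a ∈ A, Complex.normSq (g a) ≤ T) :
    Complex.normSq (∑ a ∈ A, g a) ≤ (A.card : ℝ) * T := by
  rw [← Complex.sq_norm]
  have h1 : ‖∑ a ∈ A, g a‖ ≤ ∑ a ∈ A, ‖g a‖ :=
    norm_sum_le _ _
  have h2 : (‖∑ a ∈ A, g a‖)^2 ≤ (∑ a ∈ A, ‖g a‖)^2 :=
    pow_le_pow_left₀ (norm_nonneg _) h1 2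
  have h3 : (∑ a ∈ A, ‖g a‖)^2
      ≤ (∑ a ∈ A, (1:ℝ)^2) * ∑ a ∈ A, (‖g a‖)^2 := by
    have := Finset.sum_mul_sq_le_sq_mul_sq A (fun _ => (1:ℝ)) (fun a => ‖g a‖)
    simpa using this
  have h4 : (∑ a ∈ A, (1:ℝ)^2) = (A.card : ℝ) := by simp
  have h5 : ∑ a ∈ A, (‖g a‖)^2 = ∑ a ∈ A, Complex.normSq (g a) := by
    exact Finset.sum_congr rfl fun a _ => Complex.sq_norm _
  calc (‖∑ a ∈ A, g a‖)^2 ≤ (∑ a ∈ A, (1:ℝ)^2) * ∑ a ∈ A, (‖g a‖)^2 :=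
        le_trans h2 h3
    _ = (A.card : ℝ) * ∑ a ∈ A, Complex.normSq (g a) := by rw [h4, h5]
    _ ≤ (A.card : ℝ) * T := by
        apply mul_le_mul_of_nonneg_left hT (by positivity)

lemma norm_colsum (χ : MulChar F ℂ) (hχ : χ ≠ 1) (V : Finset F) :
    ∑ x : F, Complex.normSq (∑ v ∈ V, χ (v - x))
      = (Fintype.card F : ℝ) * (V.card : ℝ) - (V.card : ℝ)^2 := by
  have h := colsum χ hχ V
  simp_rw [Complex.mul_conj] at h
  have : ((∑ x : F, Complex.normSq (∑ v ∈ V, χ (v - x)) : ℝ) : ℂ)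
      = (((Fintype.card F : ℝ) * (V.card : ℝ) - (V.card : ℝ)^2 : ℝ) : ℂ) := by
    push_cast
    exact h
  exact_mod_cast this

lemma norm_colsum2 (χ : MulChar F ℂ) (hχ : χ ≠ 1) (W : Finset F) :
    ∑ x : F, Complex.normSq (∑ w ∈ W, χ (x - w))
      = (Fintype.card F : ℝ) * (W.card : ℝ) - (W.card : ℝ)^2 := by
  have h := colsum2 χ hχ W
  simp_rw [Complex.mul_conj] at h
  have : ((∑ x : F, Complex.normSq (∑ w ∈ W, χ (x - w)) : ℝ) : ℂ)
      = (((Fintype.card F : ℝ) * (W.card : ℝ) - (W.card : ℝ)^2 : ℝ) : ℂ) := by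
    push_cast
    exact h
  exact_mod_cast this

lemma bbound1 (χ : MulChar F ℂ) (hχ : χ ≠ 1) (V W : Finset F) :
    Complex.normSq (Bchar V W χ)
      ≤ (W.card : ℝ) * ((Fintype.card F : ℝ) * (V.card : ℝ) - (V.card : ℝ)^2) := by
  have hB : Bchar V W χ = ∑ w ∈ W, (∑ v ∈ V, χ (v - w)) := Finset.sum_comm
  rw [hB]
  refine sq_abs_sum_le W _ _ ?_
  rw [← norm_colsum χ hχ V]
  exact Finset.sum_le_sum_of_subset_of_nonneg (Finset.subset_univ W)
    (fun _ _ _ => Complex.normSq_nonneg _)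

lemma bbound2 (χ : MulChar F ℂ) (hχ : χ ≠ 1) (V W : Finset F) :
    Complex.normSq (Bchar V W χ)
      ≤ (V.card : ℝ) * ((Fintype.card F : ℝ) * (W.card : ℝ) - (W.card : ℝ)^2) := by
  rw [Bchar]
  refine sq_abs_sum_le V _ _ ?_
  rw [← norm_colsum2 χ hχ W]
  exact Finset.sum_le_sum_of_subset_of_nonneg (Finset.subset_univ V)
    (fun _ _ _ => Complex.normSq_nonneg _)

lemma schar_one (U : Finset F) (hU : ∀ u ∈ U, u ≠ 0) :
    Schar U 1 = (U.card : ℂ) := by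
  rw [Schar]
  have : ∀ u ∈ U, (1 : MulChar F ℂ) u = 1 := fun u hu =>
    MulChar.one_apply (isUnit_iff_ne_zero.mpr (hU u hu))
  rw [Finset.sum_congr rfl this, Finset.sum_const, nsmul_eq_mul, mul_one]

lemma bchar_one (V W : Finset F) :
    Bchar V W 1 = (V.card : ℂ) * (W.card : ℂ) - ((V ∩ W).card : ℂ) := by
  rw [Bchar]
  have h : ∀ v ∈ V, ∀ w ∈ W, (1 : MulChar F ℂ) (v - w)
      = 1 - (if w = v then 1 else 0) := by
    intro v _ w _
    rcases eq_or_ne w v with rfl | hw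
    · rw [sub_self, MulChar.map_nonunit _ not_isUnit_zero, if_pos rfl]
      ring
    · rw [MulChar.one_apply (isUnit_iff_ne_zero.mpr (sub_ne_zero.mpr (Ne.symm hw))), if_neg hw]
      ring
  calc ∑ v ∈ V, ∑ w ∈ W, (1 : MulChar F ℂ) (v - w)
      = ∑ v ∈ V, ∑ w ∈ W, (1 - (if w = v then 1 else 0) : ℂ) :=
        Finset.sum_congr rfl fun v hv => Finset.sum_congr rfl fun w hw => h v hv w hw
    _ = ∑ v ∈ V, ((W.card : ℂ) - (if v ∈ W then 1 else 0)) := by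
        refine Finset.sum_congr rfl fun v _ => ?_
        rw [Finset.sum_sub_distrib, Finset.sum_const, nsmul_eq_mul, mul_one,
          Finset.sum_ite_eq' W v (fun _ => (1:ℂ))]
    _ = (V.card : ℂ) * (W.card : ℂ) - ((V ∩ W).card : ℂ) := by
        rw [Finset.sum_sub_distrib, Finset.sum_const, nsmul_eq_mul,
          Finset.sum_ite_mem V W (fun _ => (1:ℂ))]
        simp

end Aux

/-- `|N(U,V,W) − U²V²W²/(q−1)| ≤ q U V W` over a finite field with `q` elements. -/

theorem Ncount_asymptotic (F : Type*) [Field F] [Fintype F] [DecidableEq F]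
    (U V W : Finset F)
    (hU : ∀ u ∈ U, u ≠ 0) (hV : ∀ v ∈ V, v ≠ 0) (hW : ∀ w ∈ W, w ≠ 0) :
    |(Ncount U V W : ℝ) -
        (U.card : ℝ) ^ (2 : ℕ) * (V.card : ℝ) ^ (2 : ℕ) * (W.card : ℝ) ^ (2 : ℕ) /
          ((Fintype.card F : ℝ) - 1)| ≤
      (Fintype.card F : ℝ) * (U.card : ℝ) * (V.card : ℝ) * (W.card : ℝ) := by
  classical
  rcases eq_or_ne U ∅ with rfl | hUne
  · simp [Ncount]
  rcases eq_or_ne V ∅ with rfl | hVne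
  · simp [Ncount]
  rcases eq_or_ne W ∅ with rfl | hWne
  · simp [Ncount]
  have hq2 : (2:ℝ) ≤ (Fintype.card F : ℝ) := by
    exact_mod_cast Fintype.one_lt_card (α := F)
  have hc : (0:ℝ) < (Fintype.card F : ℝ) - 1 := by linarith
  have hcard : ∀ (A : Finset F), (∀ a ∈ A, a ≠ 0) →
      (A.card : ℝ) ≤ (Fintype.card F : ℝ) - 1 := by
    intro A hA
    have hsub : A ⊆ Finset.univ.erase 0 := fun a ha =>
      Finset.mem_erase.mpr ⟨hA a ha, Finset.mem_univ a⟩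
    have h1 := Finset.card_le_card hsub
    rw [Finset.card_erase_of_mem (Finset.mem_univ 0), Finset.card_univ] at h1
    have h3 : 1 ≤ Fintype.card F := Fintype.card_pos
    have : ((A.card : ℕ) : ℝ) ≤ ((Fintype.card F - 1 : ℕ) : ℝ) := by exact_mod_cast h1
    rwa [Nat.cast_sub h3, Nat.cast_one] at this
  have hu1 := hcard U hU
  have hv1 := hcard V hV
  have hw1 := hcard W hW
  have hdv : ((V ∩ W).card : ℝ) ≤ (V.card : ℝ) := by
    exact_mod_cast Finset.card_le_card (Finset.inter_subset_left)
  have hdw : ((V ∩ W).card : ℝ) ≤ (W.card : ℝ) := by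
    exact_mod_cast Finset.card_le_card (Finset.inter_subset_right)
  -- the error sum over nontrivial characters
  have hE0 : (0:ℝ) ≤ ∑ χ ∈ (Finset.univ.erase (1 : MulChar F ℂ)),
      Complex.normSq (Schar U χ * Bchar V W χ) :=
    Finset.sum_nonneg fun χ _ => Complex.normSq_nonneg _
  have h11 : Complex.normSq (Schar U 1 * Bchar V W 1)
      = ((U.card : ℝ) * ((V.card : ℝ) * (W.card : ℝ) - ((V ∩ W).card : ℝ)))^2 := by
    rw [schar_one U hU, bchar_one V W,
      show (U.card : ℂ) * ((V.card : ℂ) * (W.card : ℂ) - ((V ∩ W).card : ℂ))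
        = (((U.card : ℝ) * ((V.card : ℝ) * (W.card : ℝ) - ((V ∩ W).card : ℝ)) : ℝ) : ℂ) by
          push_cast; ring,
      Complex.normSq_ofReal, sq]
  have hsum_split : ∑ χ : MulChar F ℂ, Complex.normSq (Schar U χ * Bchar V W χ)
      = (∑ χ ∈ (Finset.univ.erase (1 : MulChar F ℂ)),
          Complex.normSq (Schar U χ * Bchar V W χ))
        + Complex.normSq (Schar U 1 * Bchar V W 1) :=
    (Finset.sum_erase_add _ _ (Finset.mem_univ (1 : MulChar F ℂ))).symm
  have hNr : (Ncount U V W : ℝ)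
      = ((Fintype.card F : ℝ) - 1)⁻¹ *
          ((∑ χ ∈ (Finset.univ.erase (1 : MulChar F ℂ)),
            Complex.normSq (Schar U χ * Bchar V W χ))
           + ((U.card : ℝ) * ((V.card : ℝ) * (W.card : ℝ) - ((V ∩ W).card : ℝ)))^2)
        + ((U.card : ℝ) * ((V ∩ W).card : ℝ))^2 := by
    have hmc := main_identity U V W hU
    simp_rw [Complex.mul_conj] at hmc
    have hstep : (∑ χ : MulChar F ℂ, ((Complex.normSq (Schar U χ * Bchar V W χ) : ℝ) : ℂ))
        = ((((∑ χ ∈ (Finset.univ.erase (1 : MulChar F ℂ)),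
            Complex.normSq (Schar U χ * Bchar V W χ))
           + ((U.card : ℝ) * ((V.card : ℝ) * (W.card : ℝ) - ((V ∩ W).card : ℝ)))^2 : ℝ)) : ℂ) := by
      rw [← Complex.ofReal_sum, hsum_split, h11]
    rw [hstep] at hmc
    have hcast : ((Fintype.card F : ℂ) - 1)⁻¹ *
        ((((∑ χ ∈ (Finset.univ.erase (1 : MulChar F ℂ)),
            Complex.normSq (Schar U χ * Bchar V W χ))
           + ((U.card : ℝ) * ((V.card : ℝ) * (W.card : ℝ) - ((V ∩ W).card : ℝ)))^2 : ℝ)) : ℂ)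
        + ((U.card : ℂ) * ((V ∩ W).card : ℂ)) ^ 2
        = ((((Fintype.card F : ℝ) - 1)⁻¹ *
          ((∑ χ ∈ (Finset.univ.erase (1 : MulChar F ℂ)),
            Complex.normSq (Schar U χ * Bchar V W χ))
           + ((U.card : ℝ) * ((V.card : ℝ) * (W.card : ℝ) - ((V ∩ W).card : ℝ)))^2)
        + ((U.card : ℝ) * ((V ∩ W).card : ℝ))^2 : ℝ) : ℂ) := by
      push_cast
      ring
    rw [hcast] at hmc
    apply Complex.ofReal_injective
    rw [Complex.ofReal_natCast]
    exact hmc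
  have hSr : ∑ χ : MulChar F ℂ, Complex.normSq (Schar U χ)
      = ((Fintype.card F : ℝ) - 1) * (U.card : ℝ) := by
    have h := schar_orth U hU
    simp_rw [Complex.mul_conj] at h
    rw [← Complex.ofReal_sum] at h
    have hcast : ((Fintype.card F : ℂ) - 1) * (U.card : ℂ)
        = ((((Fintype.card F : ℝ) - 1) * (U.card : ℝ) : ℝ) : ℂ) := by push_cast; ring
    rw [hcast] at h
    exact Complex.ofReal_injective h
  have hS1 : Complex.normSq (Schar U 1) = (U.card : ℝ)^2 := by
    rw [schar_one U hU, show ((U.card : ℂ)) = (((U.card : ℝ) : ℝ) : ℂ) by push_cast; ring,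
      Complex.normSq_ofReal, sq]
  have hSsum : ∑ χ ∈ (Finset.univ.erase (1 : MulChar F ℂ)), Complex.normSq (Schar U χ)
      = ((Fintype.card F : ℝ) - 1) * (U.card : ℝ) - (U.card : ℝ)^2 := by
    have h : (∑ χ ∈ (Finset.univ.erase (1 : MulChar F ℂ)), Complex.normSq (Schar U χ))
        + Complex.normSq (Schar U 1) = ∑ χ : MulChar F ℂ, Complex.normSq (Schar U χ) :=
      Finset.sum_erase_add _ _ (Finset.mem_univ (1 : MulChar F ℂ))
    rw [hSr] at h
    rw [← h, hS1]
    ring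
  have hEb : (∑ χ ∈ (Finset.univ.erase (1 : MulChar F ℂ)),
        Complex.normSq (Schar U χ * Bchar V W χ))
      ≤ (((Fintype.card F : ℝ) - 1) * (U.card : ℝ) - (U.card : ℝ)^2) *
          ((V.card : ℝ) * (W.card : ℝ) *
            ((Fintype.card F : ℝ) - max (V.card : ℝ) (W.card : ℝ))) := by
    have hM : ∀ χ ∈ Finset.univ.erase (1 : MulChar F ℂ),
        Complex.normSq (Schar U χ * Bchar V W χ)
          ≤ Complex.normSq (Schar U χ) * ((V.card : ℝ) * (W.card : ℝ) *
              ((Fintype.card F : ℝ) - max (V.card : ℝ) (W.card : ℝ))) := by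
      intro χ hχ
      have hne : χ ≠ 1 := (Finset.mem_erase.mp hχ).1
      rw [Complex.normSq_mul]
      apply mul_le_mul_of_nonneg_left _ (Complex.normSq_nonneg _)
      rcases le_total (V.card : ℝ) (W.card : ℝ) with hvw | hvw
      · rw [max_eq_right hvw]
        calc Complex.normSq (Bchar V W χ)
            ≤ (V.card : ℝ) * ((Fintype.card F : ℝ) * (W.card : ℝ) - (W.card : ℝ)^2) :=
              bbound2 χ hne V W
          _ = (V.card : ℝ) * (W.card : ℝ) * ((Fintype.card F : ℝ) - (W.card : ℝ)) := by ring
      · rw [max_eq_left hvw]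
        calc Complex.normSq (Bchar V W χ)
            ≤ (W.card : ℝ) * ((Fintype.card F : ℝ) * (V.card : ℝ) - (V.card : ℝ)^2) :=
              bbound1 χ hne V W
          _ = (V.card : ℝ) * (W.card : ℝ) * ((Fintype.card F : ℝ) - (V.card : ℝ)) := by ring
    calc (∑ χ ∈ (Finset.univ.erase (1 : MulChar F ℂ)),
          Complex.normSq (Schar U χ * Bchar V W χ))
        ≤ ∑ χ ∈ (Finset.univ.erase (1 : MulChar F ℂ)),
            Complex.normSq (Schar U χ) * ((V.card : ℝ) * (W.card : ℝ) *
              ((Fintype.card F : ℝ) - max (V.card : ℝ) (W.card : ℝ))) :=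
          Finset.sum_le_sum hM
      _ = _ := by rw [← Finset.sum_mul, hSsum]
  -- now abstract everything
  set q : ℝ := (Fintype.card F : ℝ) with hqdef
  set u : ℝ := (U.card : ℝ) with hudef
  set v : ℝ := (V.card : ℝ) with hvdef
  set w : ℝ := (W.card : ℝ) with hwdef
  set d : ℝ := ((V ∩ W).card : ℝ) with hddef
  set E : ℝ := ∑ χ ∈ (Finset.univ.erase (1 : MulChar F ℂ)),
      Complex.normSq (Schar U χ * Bchar V W χ) with hEdef
  set m : ℝ := max v w with hmdef
  have hu0 : 0 ≤ u := Nat.cast_nonneg _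
  have hv0 : 0 ≤ v := Nat.cast_nonneg _
  have hw0 : 0 ≤ w := Nat.cast_nonneg _
  have hd0 : 0 ≤ d := Nat.cast_nonneg _
  have hm0 : 0 ≤ m := le_trans hv0 (le_max_left _ _)
  have hm1 : m ≤ q - 1 := max_le hv1 hw1
  have hq0 : 0 < q := by linarith
  set N : ℝ := (Ncount U V W : ℝ) with hNdef
  have hkey : (N - u^2 * v^2 * w^2 / (q - 1)) * (q - 1)
      = u^2*(q*d^2 - 2*v*w*d) + E := by
    rw [hNr]
    field_simp
    ring
  clear_value N q u v w d E m
  clear hNdef hNr hsum_split h11 hS1 hSr hSsum hcard hU hV hW hUne hVne hWne hEdef hqdef hudef hvdef hwdef hddef hmdef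
  rw [abs_le]
  constructor
  · rw [← mul_le_mul_iff_of_pos_right hc, hkey]
    have s1 : q * (u^2*(2*v*w*d - q*d^2)) ≤ u^2*(v*w)^2 := by
      nlinarith [mul_nonneg (sq_nonneg u) (sq_nonneg (v*w - q*d))]
    have s2 : (u*(v*w)) * (u*(v*w)) ≤ (u*(v*w)) * (q^2*(q-1)) := by
      have huvw : u*(v*w) ≤ (q-1)*((q-1)*(q-1)) :=
        mul_le_mul hu1 (mul_le_mul hv1 hw1 hw0 (by linarith)) (mul_nonneg hv0 hw0)
          (by linarith)
      have h3 : (q-1)*((q-1)*(q-1)) ≤ q^2*(q-1) := by nlinarith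
      exact mul_le_mul_of_nonneg_left (le_trans huvw h3)
        (mul_nonneg hu0 (mul_nonneg hv0 hw0))
    have s4 : u^2*(2*v*w*d - q*d^2) ≤ q*u*v*w*(q-1) := by nlinarith [s1, s2, hq0]
    linarith [hE0]
  · rw [← mul_le_mul_iff_of_pos_right hc, hkey]
    have hd2 : d*d ≤ v*w := mul_le_mul hdv hdw hd0 hv0
    have s1 : u^2*(q*d^2 - 2*v*w*d) ≤ u^2*q*(v*w) := by
      nlinarith [mul_nonneg (mul_nonneg (sq_nonneg u) hq0.le) (sub_nonneg.mpr hd2),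
        mul_nonneg (mul_nonneg (sq_nonneg u) (mul_nonneg hv0 hw0)) hd0]
    have hpos : 0 ≤ u*(v*w)*m*(q-1-u) :=
      mul_nonneg (mul_nonneg (mul_nonneg hu0 (mul_nonneg hv0 hw0)) hm0)
        (by linarith)
    have s3 : u^2*q*(v*w) + (((q-1))*u - u^2) * (v*w*(q - m)) ≤ q*u*v*w*(q-1) := by
      linarith [hpos]
    linarith [hEb, s1, s3]
end

section
/- There exists an absolute constant c > 0 such that the following holds. Let p be a prime and let U ⊆ F_p be a set of cardinality U. Then D_×(U) ≤ c · (U² · T(U) + U⁶). -/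
/-- `D_×(U)`: the number of solutions of
`(u₁−v₁)(u₂−v₂) = (u₃−v₃)(u₄−v₄)` with all eight variables in `U`. -/
def Dtimes {F : Type*} [Field F] [DecidableEq F] (U : Finset F) : ℕ :=
  (((U ×ˢ U) ×ˢ (U ×ˢ U) ×ˢ (U ×ˢ U) ×ˢ (U ×ˢ U)).filter
    (fun t => (t.1.1 - t.1.2) * (t.2.1.1 - t.2.1.2) =
      (t.2.2.1.1 - t.2.2.1.2) * (t.2.2.2.1 - t.2.2.2.2))).card

/-- `T(U)`: the number of solutions of `(u₁−v)/(u₂−v) = (u₃−w)/(u₄−w)` with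
`u₁,u₂,u₃,u₄,v,w ∈ U` and both denominators nonzero; the tuple is structured as
`((u₁,u₂),((u₃,u₄),(v,w)))`. -/
def Tcount {F : Type*} [Field F] [DecidableEq F] (U : Finset F) : ℕ :=
  (((U ×ˢ U) ×ˢ (U ×ˢ U) ×ˢ (U ×ˢ U)).filter
    (fun t => t.1.2 - t.2.2.1 ≠ 0 ∧ t.2.1.2 - t.2.2.2 ≠ 0 ∧
      (t.1.1 - t.2.2.1) / (t.1.2 - t.2.2.1) =
        (t.2.1.1 - t.2.2.2) / (t.2.1.2 - t.2.2.2))).card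

namespace DtimesAux

open Finset

variable {F : Type*} [Field F] [DecidableEq F] (U : Finset F)

/-- pairs `m = (x,y) ∈ U×U` with `(x - v)(y - w) = b`. -/
def Nset (b v w : F) : Finset (F × F) :=
  (U ×ˢ U).filter (fun m => (m.1 - v) * (m.2 - w) = b)

/-- quadruples `((u₁,v₁),(u₂,v₂))` with `(u₁-v₁)(u₂-v₂) = b`. -/
def Rset (b : F) : Finset ((F × F) × (F × F)) :=
  ((U ×ˢ U) ×ˢ (U ×ˢ U)).filter (fun q => (q.1.1 - q.1.2) * (q.2.1 - q.2.2) = b)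

lemma lemA [Fintype F] : Dtimes U = ∑ b : F, (Rset U b).card ^ 2 := by
  rw [Dtimes, card_eq_sum_card_fiberwise
    (f := fun t => (t.1.1 - t.1.2) * (t.2.1.1 - t.2.1.2)) (t := Finset.univ)
    (fun x _ => mem_univ _)]
  refine Finset.sum_congr rfl fun b _ => ?_
  rw [sq, ← Finset.card_product]
  refine card_nbij' (fun t => ((t.1, t.2.1), (t.2.2.1, t.2.2.2)))
    (fun x => (x.1.1, x.1.2, x.2.1, x.2.2)) ?_ ?_ ?_ ?_
  · intro t ht
    simp only [mem_coe, mem_filter, mem_product, Rset] at ht ⊢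
    obtain ⟨⟨h1, heq⟩, hb⟩ := ht
    exact ⟨⟨⟨h1.1, h1.2.1⟩, hb⟩, ⟨h1.2.2.1, h1.2.2.2⟩, heq ▸ hb⟩
  · intro x hx
    simp only [mem_coe, mem_filter, mem_product, Rset] at hx ⊢
    obtain ⟨⟨⟨ha, hc⟩, hb1⟩, ⟨hd, he⟩, hb2⟩ := hx
    exact ⟨⟨⟨ha, hc, hd, he⟩, hb1.trans hb2.symm⟩, hb1⟩
  · intro t _; rfl
  · intro x _; rfl

lemma lemB (b : F) : (Rset U b).card = ∑ d ∈ U ×ˢ U, (Nset U b d.1 d.2).card := by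
  rw [card_eq_sum_card_fiberwise (f := fun q => (q.1.2, q.2.2)) (t := U ×ˢ U) ?_]
  · refine Finset.sum_congr rfl fun d hd => ?_
    refine card_nbij' (fun q => (q.1.1, q.2.1)) (fun m => ((m.1, d.1), (m.2, d.2))) ?_ ?_ ?_ ?_
    · intro q hq
      simp only [mem_coe, mem_filter, mem_product, Rset, Nset, Prod.ext_iff] at hq ⊢
      obtain ⟨⟨⟨⟨ha, hv'⟩, hc, hw'⟩, heq⟩, hv, hw⟩ := hq
      refine ⟨⟨ha, hc⟩, ?_⟩
      rw [← hv, ← hw]; exact heq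
    · intro m hm
      simp only [mem_coe, mem_filter, mem_product, Rset, Nset] at hm ⊢
      simp only [mem_product] at hd
      exact ⟨⟨⟨⟨hm.1.1, hd.1⟩, hm.1.2, hd.2⟩, hm.2⟩, trivial⟩
    · intro q hq
      simp only [mem_coe, mem_filter, Prod.ext_iff] at hq
      obtain ⟨-, hv, hw⟩ := hq
      simp only [Prod.ext_iff]
      refine ⟨⟨trivial, hv.symm⟩, trivial, hw.symm⟩
    · intro m _; rfl
  · intro q hq
    simp only [mem_coe, mem_filter, mem_product, Rset] at hq
    exact mem_product.2 ⟨hq.1.1.2, hq.1.2.2⟩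

lemma lemC : (Rset U 0).card ≤ 2 * U.card ^ 3 := by
  have hsub : Rset U 0 ⊆
      ((U ×ˢ U) ×ˢ (U ×ˢ U)).filter (fun q => q.1.1 = q.1.2) ∪
      ((U ×ˢ U) ×ˢ (U ×ˢ U)).filter (fun q => q.2.1 = q.2.2) := by
    intro q hq
    simp only [Rset, mem_filter, mem_union] at hq ⊢
    rcases mul_eq_zero.1 hq.2 with h | h
    · exact Or.inl ⟨hq.1, sub_eq_zero.1 h⟩
    · exact Or.inr ⟨hq.1, sub_eq_zero.1 h⟩
  refine (card_le_card hsub).trans ((card_union_le _ _).trans ?_)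
  have h1 : (((U ×ˢ U) ×ˢ (U ×ˢ U)).filter (fun q => q.1.1 = q.1.2)).card
      ≤ U.card ^ 3 := by
    have key := card_le_card_of_injOn (f := fun q => (q.1.1, q.2))
      (s := ((U ×ˢ U) ×ˢ (U ×ˢ U)).filter (fun q => q.1.1 = q.1.2))
      (t := U ×ˢ (U ×ˢ U)) ?_ ?_
    · calc _ ≤ (U ×ˢ (U ×ˢ U)).card := key
        _ = U.card ^ 3 := by simp [card_product]; ring
    · intro q hq
      simp only [mem_coe, mem_filter, mem_product] at hq ⊢
      exact ⟨hq.1.1.1, hq.1.2⟩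
    · intro q hq q' hq' h
      simp only [coe_filter, Set.mem_setOf_eq, mem_product] at hq hq'
      simp only [Prod.ext_iff] at h ⊢
      refine ⟨⟨h.1, ?_⟩, h.2⟩
      rw [← hq.2, ← hq'.2]; exact h.1
  have h2 : (((U ×ˢ U) ×ˢ (U ×ˢ U)).filter (fun q => q.2.1 = q.2.2)).card
      ≤ U.card ^ 3 := by
    have key := card_le_card_of_injOn (f := fun q => (q.1, q.2.1))
      (s := ((U ×ˢ U) ×ˢ (U ×ˢ U)).filter (fun q => q.2.1 = q.2.2))
      (t := (U ×ˢ U) ×ˢ U) ?_ ?_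
    · calc _ ≤ ((U ×ˢ U) ×ˢ U).card := key
        _ = U.card ^ 3 := by simp [card_product]; ring
    · intro q hq
      simp only [mem_coe, mem_filter, mem_product] at hq ⊢
      exact ⟨hq.1.1, hq.1.2.1⟩
    · intro q hq q' hq' h
      simp only [coe_filter, Set.mem_setOf_eq, mem_product] at hq hq'
      simp only [Prod.ext_iff] at h ⊢
      refine ⟨h.1, h.2, ?_⟩
      rw [← hq.2, ← hq'.2]; exact h.2
  omega

lemma lemD [Fintype F] :
    ∑ b ∈ (Finset.univ : Finset F).erase 0, ∑ d ∈ U ×ˢ U,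
      (Nset U b d.1 d.2).card ^ 2 ≤ Tcount U := by
  classical
  set E := ((U ×ˢ U) ×ˢ (U ×ˢ U) ×ˢ (U ×ˢ U)).filter
    (fun t => (t.1.1 - t.2.2.1) * (t.2.1.2 - t.2.2.2) =
        (t.1.2 - t.2.2.1) * (t.2.1.1 - t.2.2.2) ∧
      (t.1.1 - t.2.2.1) * (t.2.1.2 - t.2.2.2) ≠ 0) with hE
  have hET : E.card ≤ Tcount U := by
    apply card_le_card
    rw [hE]
    apply monotone_filter_right
    rintro ⟨⟨a1, a2⟩, ⟨a3, a4⟩, v, w⟩ _ ⟨heq, hne⟩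
    have h1 : a1 - v ≠ 0 := left_ne_zero_of_mul hne
    have h4 : a4 - w ≠ 0 := right_ne_zero_of_mul hne
    have hne' : (a2 - v) * (a3 - w) ≠ 0 := heq ▸ hne
    have h2 : a2 - v ≠ 0 := left_ne_zero_of_mul hne'
    have h3 : a3 - w ≠ 0 := right_ne_zero_of_mul hne'
    refine ⟨h2, h4, ?_⟩
    rw [div_eq_div_iff h2 h4]
    linear_combination heq
  refine le_trans (le_of_eq ?_) hET
  rw [card_eq_sum_card_fiberwise
    (f := fun t => (t.1.1 - t.2.2.1) * (t.2.1.2 - t.2.2.2))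
    (t := (Finset.univ : Finset F).erase 0) ?_]
  · refine Finset.sum_congr rfl fun b hb => ?_
    rw [card_eq_sum_card_fiberwise (f := fun t => t.2.2) (t := U ×ˢ U) ?_]
    · refine Finset.sum_congr rfl fun d hd => ?_
      rw [sq, ← Finset.card_product]
      refine card_nbij' (fun m => ((m.1.1, m.2.1), (m.2.2, m.1.2), d))
        (fun t => ((t.1.1, t.2.1.2), (t.1.2, t.2.1.1))) ?_ ?_ ?_ ?_
      · rintro ⟨⟨x, y⟩, x', y'⟩ hm
        simp only [mem_coe, mem_product, mem_filter, Nset, hE] at hm ⊢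
        obtain ⟨⟨⟨hx, hy⟩, he1⟩, ⟨hx', hy'⟩, he2⟩ := hm
        have hb0 : b ≠ 0 := (mem_erase.1 hb).1
        simp only [mem_product] at hd
        exact ⟨⟨⟨⟨⟨hx, hx'⟩, ⟨hy', hy⟩, hd.1, hd.2⟩, he1.trans he2.symm, he1 ▸ hb0⟩,
          he1⟩, trivial⟩
      · rintro ⟨⟨a1, a2⟩, ⟨a3, a4⟩, vw⟩ ht
        simp only [mem_coe, mem_product, mem_filter, Nset, hE] at ht ⊢
        obtain ⟨⟨⟨⟨⟨h1, h2⟩, ⟨h3, h4⟩, hv, hw⟩, heqE, hneE⟩, hkey⟩, hdd⟩ := ht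
        subst hdd
        exact ⟨⟨⟨h1, h4⟩, hkey⟩, ⟨h2, h3⟩, heqE ▸ hkey⟩
      · rintro ⟨⟨x, y⟩, x', y'⟩ _; rfl
      · rintro ⟨⟨a1, a2⟩, ⟨a3, a4⟩, vw⟩ ht
        simp only [mem_coe, mem_filter] at ht
        obtain ⟨-, hdd⟩ := ht
        subst hdd
        rfl
    · rintro t ht
      simp only [mem_coe, mem_filter, mem_product, hE] at ht
      exact mem_product.2 ⟨ht.1.1.2.2.1, ht.1.1.2.2.2⟩
  · intro t ht
    rw [hE, mem_coe, mem_filter] at ht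
    exact mem_erase.2 ⟨ht.2.2, mem_univ _⟩

end DtimesAux

open Finset DtimesAux in
/-- `D_×(U) ≪ U² T(U) + U⁶`. -/
theorem Dtimes_le_Tcount :
    ∃ c : ℝ, 0 < c ∧
      ∀ (p : ℕ) [Fact p.Prime] (U : Finset (ZMod p)),
        (Dtimes U : ℝ) ≤
          c * ((U.card : ℝ) ^ (2 : ℕ) * (Tcount U : ℝ) + (U.card : ℝ) ^ (6 : ℕ)) := by
  refine ⟨4, by norm_num, ?_⟩
  intro p _ U
  have key : (Dtimes U : ℝ) = ((Rset U 0).card : ℝ) ^ 2 +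
      ∑ b ∈ (Finset.univ : Finset (ZMod p)).erase 0, ((Rset U b).card : ℝ) ^ 2 := by
    rw [lemA U]
    push_cast
    rw [← Finset.add_sum_erase _ _ (mem_univ (0 : ZMod p))]
  rw [key]
  have h0 : ((Rset U 0).card : ℝ) ^ 2 ≤ 4 * (U.card : ℝ) ^ 6 := by
    have h : ((Rset U 0).card : ℝ) ≤ 2 * (U.card : ℝ) ^ 3 := by
      exact_mod_cast lemC U
    calc ((Rset U 0).card : ℝ) ^ 2 ≤ (2 * (U.card : ℝ) ^ 3) ^ 2 := by
          apply pow_le_pow_left₀ (by positivity) h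
      _ = 4 * (U.card : ℝ) ^ 6 := by ring
  have h1 : ∀ b : ZMod p, ((Rset U b).card : ℝ) ^ 2 ≤
      (U.card : ℝ) ^ 2 * ∑ d ∈ U ×ˢ U, ((Nset U b d.1 d.2).card : ℝ) ^ 2 := by
    intro b
    have hcs := sq_sum_le_card_mul_sum_sq (s := U ×ˢ U)
      (f := fun d => ((Nset U b d.1 d.2).card : ℝ))
    rw [lemB U b]
    push_cast
    calc (∑ d ∈ U ×ˢ U, ((Nset U b d.1 d.2).card : ℝ)) ^ 2
        ≤ ((U ×ˢ U).card : ℝ) * ∑ d ∈ U ×ˢ U, ((Nset U b d.1 d.2).card : ℝ) ^ 2 := hcs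
      _ = (U.card : ℝ) ^ 2 * ∑ d ∈ U ×ˢ U, ((Nset U b d.1 d.2).card : ℝ) ^ 2 := by
          rw [card_product]; push_cast; ring
  have h2 : ∑ b ∈ (Finset.univ : Finset (ZMod p)).erase 0, ((Rset U b).card : ℝ) ^ 2
      ≤ (U.card : ℝ) ^ 2 * (Tcount U : ℝ) := by
    calc ∑ b ∈ (Finset.univ : Finset (ZMod p)).erase 0, ((Rset U b).card : ℝ) ^ 2
        ≤ ∑ b ∈ (Finset.univ : Finset (ZMod p)).erase 0,
            (U.card : ℝ) ^ 2 * ∑ d ∈ U ×ˢ U, ((Nset U b d.1 d.2).card : ℝ) ^ 2 :=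
          Finset.sum_le_sum fun b _ => h1 b
      _ = (U.card : ℝ) ^ 2 * ∑ b ∈ (Finset.univ : Finset (ZMod p)).erase 0,
            ∑ d ∈ U ×ˢ U, ((Nset U b d.1 d.2).card : ℝ) ^ 2 := by
          rw [Finset.mul_sum]
      _ ≤ (U.card : ℝ) ^ 2 * (Tcount U : ℝ) := by
          refine mul_le_mul_of_nonneg_left ?_ (by positivity)
          exact_mod_cast lemD U
  have hT : (0 : ℝ) ≤ (U.card : ℝ) ^ 2 * (Tcount U : ℝ) := by positivity
  linarith
end

section
/- Let n ≥ 2, let q be a prime power, and let ψ be an additive character of F_q. Let X₁, …, X_n ⊆ F_q be sets of cardinalities X₁, …, X_n, and for each i = 1, …, n let ω_i : F_q^n → ℂ be a weight with |ω_i(x)| ≤ 1 for all x ∈ F_q^n, such that ω_i(x₁,…,x_n) does not depend on the i-th coordinate x_i. Define T_ψ(X₁,…,X_n; ω₁,…,ω_n) = Σ_{x₁∈X₁} ⋯ Σ_{x_n∈X_n} ω₁(x)⋯ω_n(x) ψ(x₁⋯x_n), where x = (x₁,…,x_n). Then |T_ψ(X₁,…,X_n; ω₁,…,ω_n)|^{2^{n−1}}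 ≤ X₁^{2^{n−1}−1} (X₂⋯X_n)^{2^{n−1}−2} · Σ_{x₂,y₂∈X₂} ⋯ Σ_{x_n,y_n∈X_n} | Σ_{x₁∈X₁} ψ(x₁(x₂−y₂)⋯(x_n−y_n)) |. -/
open scoped BigOperators

open Finset

lemma sum_piFinset_snoc' {M : Type*} [AddCommMonoid M] {F : Type*} [DecidableEq F] {m : ℕ}
    (Y : Fin (m+1) → Finset F) (f : (Fin (m+1) → F) → M) :
    ∑ x ∈ Fintype.piFinset Y, f x
      = ∑ s ∈ Y (Fin.last m), ∑ x ∈ Fintype.piFinset (fun i : Fin m => Y i.castSucc),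
          f (Fin.snoc x s) := by
  rw [← Finset.sum_product']
  refine Finset.sum_bij' (fun x _ => ((x (Fin.last m), fun i => x i.castSucc) : F × (Fin m → F)))
    (fun p _ => Fin.snoc p.2 p.1) ?_ ?_ ?_ ?_ ?_
  · intro x hx
    simp only [Fintype.mem_piFinset] at hx
    simp [Finset.mem_product, Fintype.mem_piFinset, hx]
  · rintro ⟨s, x⟩ hp
    simp only [Finset.mem_product, Fintype.mem_piFinset] at hp ⊢
    intro i
    refine Fin.lastCases ?_ ?_ i <;> simp [hp.1, hp.2]
  · intro x _; exact Fin.snoc_init_self x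
  · rintro ⟨s, x⟩ _; simp
  · intro x _; simp only []; rw [show (fun i => x i.castSucc) = Fin.init x from rfl, Fin.snoc_init_self x]

lemma key_lemma (F : Type*) [Field F] [Fintype F] [DecidableEq F] :
    ∀ (m : ℕ) (ψ : AddChar F ℂ) (A : Finset F) (Y : Fin m → Finset F)
      (w0 : (Fin m → F) → ℂ) (w : Fin m → F → (Fin m → F) → ℂ),
      (∀ y, ‖w0 y‖ ≤ 1) → (∀ i a y, ‖w i a y‖ ≤ 1) →
      (∀ (i : Fin m) (a : F) (y z : Fin m → F), (∀ j, j ≠ i → y j = z j) → w i a y = w i a z) →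
      ‖∑ y ∈ Fintype.piFinset Y, ∑ a ∈ A,
          w0 y * (∏ i, w i a y) * ψ (a * ∏ i, y i)‖ ^ (2 ^ m) ≤
        (A.card : ℝ) ^ (2 ^ m - 1) * (∏ i, ((Y i).card : ℝ)) ^ (2 ^ m - 2) *
          ∑ y ∈ Fintype.piFinset Y, ∑ z ∈ Fintype.piFinset Y,
            ‖∑ a ∈ A, ψ (a * ∏ i, (y i - z i))‖ := by
  intro m
  induction m with
  | zero =>
    intro ψ A Y w0 w h0 hw hind
    rw [show (2:ℕ)^0 = 1 from rfl]
    simp only [pow_one, show (1:ℕ) - 1 = 0 from rfl, show (1:ℕ) - 2 = 0 from rfl, pow_zero,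
      one_mul]
    have huniv : Fintype.piFinset Y = {(![] : Fin 0 → F)} := by
      ext x
      simp only [Fintype.mem_piFinset, Finset.mem_singleton]
      exact ⟨fun _ => Subsingleton.elim _ _, fun _ i => i.elim0⟩
    rw [huniv, Finset.sum_singleton, Finset.sum_singleton, Finset.sum_singleton]
    simp only [Finset.univ_eq_empty, Finset.prod_empty, mul_one]
    rw [← Finset.mul_sum, norm_mul]
    exact mul_le_of_le_one_left (norm_nonneg _) (h0 _)
  | succ m ih =>
    intro ψ A Y w0 w h0 hw hind
    classical
    set k := 2 ^ m with hk
    have hk1 : 1 ≤ k := Nat.one_le_two_pow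
    set Y' : Fin m → Finset F := fun i => Y i.castSucc with hY'
    set G : F × (Fin m → F) → ℂ := fun p => ∑ s ∈ Y (Fin.last m),
        w0 (Fin.snoc p.2 s) * (∏ i : Fin m, w i.castSucc p.1 (Fin.snoc p.2 s))
          * ψ (p.1 * ((∏ i, p.2 i) * s)) with hG
    set S : F → F → ℂ := fun s t => ∑ y ∈ Fintype.piFinset Y', ∑ a ∈ A,
        (w0 (Fin.snoc y s) * (starRingEnd ℂ) (w0 (Fin.snoc y t)))
          * (∏ i : Fin m, (w i.castSucc a (Fin.snoc y s)
              * (starRingEnd ℂ) (w i.castSucc a (Fin.snoc y t))))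
          * (ψ.mulShift (s - t)) (a * ∏ i, y i) with hS
    set R : F → F → ℝ := fun s t => ∑ y ∈ Fintype.piFinset Y', ∑ z ∈ Fintype.piFinset Y',
        ‖∑ a ∈ A, (ψ.mulShift (s - t)) (a * ∏ i, (y i - z i))‖ with hR
    have hsnoc_ne : ∀ (y z : Fin m → F) (c : F) (i : Fin m),
        (∀ j, j ≠ i → y j = z j) →
        ∀ jx : Fin (m+1), jx ≠ i.castSucc → (Fin.snoc y c : Fin (m+1) → F) jx = (Fin.snoc z c : Fin (m+1) → F) jx := by
      intro y z c i h jx hjx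
      rcases eq_or_ne jx (Fin.last m) with rfl | hne
      · simp
      · obtain ⟨i', rfl⟩ := Fin.exists_castSucc_eq.mpr hne
        simp only [Fin.snoc_castSucc]
        exact h i' fun hc => hjx (by rw [hc])
    have claimA : (∑ y ∈ Fintype.piFinset Y, ∑ a ∈ A,
          w0 y * (∏ i, w i a y) * ψ (a * ∏ i, y i))
        = ∑ p ∈ A ×ˢ Fintype.piFinset Y', w (Fin.last m) p.1 (Fin.snoc p.2 0) * G p := by
      rw [sum_piFinset_snoc' Y,
        Finset.sum_comm (s := Y (Fin.last m)) (t := Fintype.piFinset Y'),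
        Finset.sum_product,
        Finset.sum_comm (s := A) (t := Fintype.piFinset Y')]
      refine Finset.sum_congr rfl fun y' _ => ?_
      rw [Finset.sum_comm (s := Y (Fin.last m)) (t := A)]
      refine Finset.sum_congr rfl fun a _ => ?_
      simp only [hG]
      rw [Finset.mul_sum]
      refine Finset.sum_congr rfl fun s hs => ?_
      have hwj : w (Fin.last m) a (Fin.snoc y' s) = w (Fin.last m) a (Fin.snoc y' 0) := by
        refine hind (Fin.last m) a _ _ ?_
        intro j hj
        obtain ⟨i', rfl⟩ := Fin.exists_castSucc_eq.mpr hj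
        simp [Fin.snoc_castSucc]
      rw [Fin.prod_univ_castSucc (f := fun i => w i a (Fin.snoc y' s)),
        Fin.prod_univ_castSucc (f := fun i : Fin (m+1) => (Fin.snoc y' s : Fin (m+1) → F) i)]
      simp only [Fin.snoc_castSucc, Fin.snoc_last]
      rw [hwj]
      ring
    have claimB : ‖∑ y ∈ Fintype.piFinset Y, ∑ a ∈ A,
          w0 y * (∏ i, w i a y) * ψ (a * ∏ i, y i)‖
        ≤ ∑ p ∈ A ×ˢ Fintype.piFinset Y', ‖G p‖ := by
      rw [claimA]
      refine (norm_sum_le _ _).trans (Finset.sum_le_sum fun p _ => ?_)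
      rw [norm_mul]
      exact mul_le_of_le_one_left (norm_nonneg _) (hw _ _ _)
    have hGsq : ∀ p : F × (Fin m → F),
        ((‖G p‖ ^ 2 : ℝ) : ℂ) = G p * (starRingEnd ℂ) (G p) := by
      intro p
      rw [Complex.sq_norm, Complex.mul_conj]
    have claimC : ((∑ p ∈ A ×ˢ Fintype.piFinset Y', ‖G p‖ ^ 2 : ℝ) : ℂ)
        = ∑ s ∈ Y (Fin.last m), ∑ t ∈ Y (Fin.last m), S s t := by
      rw [Complex.ofReal_sum]
      have e1 : ∀ p ∈ A ×ˢ Fintype.piFinset Y',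
          ((‖G p‖ ^ 2 : ℝ) : ℂ)
            = ∑ s ∈ Y (Fin.last m), ∑ t ∈ Y (Fin.last m),
                (w0 (Fin.snoc p.2 s) * (starRingEnd ℂ) (w0 (Fin.snoc p.2 t)))
                * (∏ i : Fin m, (w i.castSucc p.1 (Fin.snoc p.2 s)
                    * (starRingEnd ℂ) (w i.castSucc p.1 (Fin.snoc p.2 t))))
                * (ψ.mulShift (s - t)) (p.1 * ∏ i, p.2 i) := by
        intro p _
        rw [hGsq p]
        simp only [hG]
        rw [map_sum, Finset.sum_mul_sum]
        refine Finset.sum_congr rfl fun s _ => Finset.sum_congr rfl fun t _ => ?_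
        have hψ : ψ (p.1 * ((∏ i, p.2 i) * s)) * (starRingEnd ℂ) (ψ (p.1 * ((∏ i, p.2 i) * t)))
            = (ψ.mulShift (s - t)) (p.1 * ∏ i, p.2 i) := by
          rw [← AddChar.map_neg_eq_conj, ← AddChar.map_add_eq_mul, AddChar.mulShift_apply]
          congr 1
          ring
        rw [Finset.prod_mul_distrib]
        simp only [map_mul, map_prod]
        rw [← hψ]
        ring
      rw [Finset.sum_congr rfl e1,
        Finset.sum_comm (s := A ×ˢ Fintype.piFinset Y') (t := Y (Fin.last m))]
      refine Finset.sum_congr rfl fun s _ => ?_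
      rw [Finset.sum_comm (s := A ×ˢ Fintype.piFinset Y') (t := Y (Fin.last m))]
      refine Finset.sum_congr rfl fun t _ => ?_
      simp only [hS]
      rw [Finset.sum_product, Finset.sum_comm (s := A) (t := Fintype.piFinset Y')]
    have claimD : (∑ p ∈ A ×ˢ Fintype.piFinset Y', ‖G p‖ ^ 2)
        ≤ ∑ s ∈ Y (Fin.last m), ∑ t ∈ Y (Fin.last m), ‖S s t‖ := by
      have h1 : (∑ p ∈ A ×ˢ Fintype.piFinset Y', ‖G p‖ ^ 2)
          = ‖∑ s ∈ Y (Fin.last m), ∑ t ∈ Y (Fin.last m), S s t‖ := by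
        rw [← claimC, Complex.norm_real, Real.norm_eq_abs, abs_of_nonneg (by positivity)]
      rw [h1]
      exact (norm_sum_le _ _).trans
        (Finset.sum_le_sum fun s _ => norm_sum_le _ _)
    have claimE : ∀ s t : F, ‖S s t‖ ^ k
        ≤ (A.card : ℝ) ^ (k - 1) * (∏ i, ((Y' i).card : ℝ)) ^ (k - 2) * R s t := by
      intro s t
      have h1 : ∀ y, ‖(fun y => w0 (Fin.snoc y s)
          * (starRingEnd ℂ) (w0 (Fin.snoc y t))) y‖ ≤ 1 := by
        intro y
        simp only [norm_mul, Complex.norm_conj]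
        exact mul_le_one₀ (h0 _) (norm_nonneg _) (h0 _)
      have h2 : ∀ (i : Fin m) (a : F) (y : Fin m → F),
          ‖(fun (i : Fin m) (a : F) (y : Fin m → F) => w i.castSucc a (Fin.snoc y s)
            * (starRingEnd ℂ) (w i.castSucc a (Fin.snoc y t))) i a y‖ ≤ 1 := by
        intro i a y
        simp only [norm_mul, Complex.norm_conj]
        exact mul_le_one₀ (hw _ _ _) (norm_nonneg _) (hw _ _ _)
      have h3 : ∀ (i : Fin m) (a : F) (y z : Fin m → F), (∀ j, j ≠ i → y j = z j) →
          (fun (i : Fin m) (a : F) (y : Fin m → F) => w i.castSucc a (Fin.snoc y s)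
            * (starRingEnd ℂ) (w i.castSucc a (Fin.snoc y t))) i a y
          = (fun (i : Fin m) (a : F) (y : Fin m → F) => w i.castSucc a (Fin.snoc y s)
            * (starRingEnd ℂ) (w i.castSucc a (Fin.snoc y t))) i a z := by
        intro i a y z h
        simp only []
        rw [hind i.castSucc a (Fin.snoc y s) (Fin.snoc z s) (hsnoc_ne y z s i h),
          hind i.castSucc a (Fin.snoc y t) (Fin.snoc z t) (hsnoc_ne y z t i h)]
      have := ih (ψ.mulShift (s - t)) A Y'
        (fun y => w0 (Fin.snoc y s) * (starRingEnd ℂ) (w0 (Fin.snoc y t)))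
        (fun (i : Fin m) (a : F) (y : Fin m → F) => w i.castSucc a (Fin.snoc y s)
            * (starRingEnd ℂ) (w i.castSucc a (Fin.snoc y t))) h1 h2 h3
      simpa only [hS, hR, hk] using this
    have claimF : (∑ s ∈ Y (Fin.last m), ∑ t ∈ Y (Fin.last m), ‖S s t‖) ^ k
        ≤ (((Y (Fin.last m)).card : ℝ) * (Y (Fin.last m)).card) ^ (k - 1)
          * ∑ s ∈ Y (Fin.last m), ∑ t ∈ Y (Fin.last m), ‖S s t‖ ^ k := by
      rw [← Finset.sum_product' (f := fun s t => ‖S s t‖),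
          ← Finset.sum_product' (f := fun s t => ‖S s t‖ ^ k)]
      have h := pow_sum_le_card_mul_sum_pow
        (s := Y (Fin.last m) ×ˢ Y (Fin.last m)) (f := fun p => ‖S p.1 p.2‖)
        (fun p _ => norm_nonneg _) (k - 1)
      rw [Nat.sub_add_cancel hk1] at h
      have hc : ((Y (Fin.last m) ×ˢ Y (Fin.last m)).card : ℝ)
          = ((Y (Fin.last m)).card : ℝ) * (Y (Fin.last m)).card := by
        rw [Finset.card_product]; push_cast; ring
      rw [hc] at h
      exact h
    have hsum : (∑ y ∈ Fintype.piFinset Y, ∑ z ∈ Fintype.piFinset Y,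
          ‖∑ a ∈ A, ψ (a * ∏ i, (y i - z i))‖)
        = ∑ s ∈ Y (Fin.last m), ∑ t ∈ Y (Fin.last m), R s t := by
      simp only [sum_piFinset_snoc' Y]
      refine Finset.sum_congr rfl fun s _ => ?_
      rw [Finset.sum_comm]
      refine Finset.sum_congr rfl fun t _ => ?_
      simp only [hR]
      refine Finset.sum_congr rfl fun y' _ => Finset.sum_congr rfl fun z' _ => ?_
      congr 1
      refine Finset.sum_congr rfl fun a _ => ?_
      rw [AddChar.mulShift_apply]
      congr 1
      rw [Fin.prod_univ_castSucc
        (f := fun i : Fin (m+1) => (Fin.snoc y' s : Fin (m+1) → F) i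
          - (Fin.snoc z' t : Fin (m+1) → F) i)]
      simp only [Fin.snoc_castSucc, Fin.snoc_last]
      ring
    have hT2 : ‖∑ y ∈ Fintype.piFinset Y, ∑ a ∈ A,
          w0 y * (∏ i, w i a y) * ψ (a * ∏ i, y i)‖ ^ 2
        ≤ ((A.card : ℝ) * ∏ i, ((Y' i).card : ℝ))
          * ∑ s ∈ Y (Fin.last m), ∑ t ∈ Y (Fin.last m), ‖S s t‖ := by
      calc ‖∑ y ∈ Fintype.piFinset Y, ∑ a ∈ A,
              w0 y * (∏ i, w i a y) * ψ (a * ∏ i, y i)‖ ^ 2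
          ≤ (∑ p ∈ A ×ˢ Fintype.piFinset Y', ‖G p‖) ^ 2 :=
            pow_le_pow_left₀ (norm_nonneg _) claimB 2
        _ ≤ ((A ×ˢ Fintype.piFinset Y').card : ℝ)
            * ∑ p ∈ A ×ˢ Fintype.piFinset Y', ‖G p‖ ^ 2 :=
            sq_sum_le_card_mul_sum_sq
        _ ≤ ((A.card : ℝ) * ∏ i, ((Y' i).card : ℝ))
            * ∑ s ∈ Y (Fin.last m), ∑ t ∈ Y (Fin.last m), ‖S s t‖ := by
            rw [Finset.card_product, Fintype.card_piFinset]
            push_cast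
            exact mul_le_mul_of_nonneg_left claimD
              (mul_nonneg (Nat.cast_nonneg _) (Finset.prod_nonneg fun i _ => Nat.cast_nonneg _))
    have hpow : (2:ℕ) ^ (m+1) = 2 * k := by rw [hk, pow_succ]; ring
    rw [hpow, hsum, pow_mul]
    have ha : (A.card : ℝ)^k * (A.card : ℝ)^(k-1) = (A.card : ℝ)^(2*k-1) := by
      rw [← pow_add]; congr 1; omega
    have hc : ((Y (Fin.last m)).card : ℝ)^(k-1) * ((Y (Fin.last m)).card : ℝ)^(k-1)
        = ((Y (Fin.last m)).card : ℝ)^(2*k-2) := by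
      rw [← pow_add]; congr 1; omega
    have hprod : (∏ i, ((Y' i).card : ℝ)) ^ k * (∏ i, ((Y' i).card : ℝ)) ^ (k - 2)
        = (∏ i, ((Y' i).card : ℝ)) ^ (2 * k - 2) := by
      rcases Nat.eq_zero_or_pos m with hm | hm
      · subst hm
        simp
      · rw [← pow_add]
        congr 1
        have h2k : 2 ≤ k := by
          rw [hk]
          calc (2:ℕ) = 2^1 := rfl
          _ ≤ 2^m := Nat.pow_le_pow_right (by norm_num) hm
        omega
    have hcoef : ((A.card : ℝ) * ∏ i, ((Y' i).card : ℝ)) ^ k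
          * ((((Y (Fin.last m)).card : ℝ) * (Y (Fin.last m)).card) ^ (k - 1)
            * ((A.card : ℝ) ^ (k-1) * (∏ i, ((Y' i).card : ℝ)) ^ (k-2)))
        = (A.card : ℝ) ^ (2*k - 1) * (∏ i : Fin (m+1), ((Y i).card : ℝ)) ^ (2*k - 2) := by
      rw [Fin.prod_univ_castSucc (f := fun i : Fin (m+1) => ((Y i).card : ℝ))]
      simp only [show ∀ i : Fin m, Y i.castSucc = Y' i from fun _ => rfl]
      rw [mul_pow (∏ i, ((Y' i).card : ℝ)) ((Y (Fin.last m)).card : ℝ) (2*k-2),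
        ← ha, ← hc, ← hprod,
        mul_pow (A.card : ℝ) (∏ i, ((Y' i).card : ℝ)) k,
        mul_pow ((Y (Fin.last m)).card : ℝ) ((Y (Fin.last m)).card : ℝ) (k-1)]
      ring
    calc (‖∑ y ∈ Fintype.piFinset Y, ∑ a ∈ A,
            w0 y * (∏ i, w i a y) * ψ (a * ∏ i, y i)‖ ^ 2) ^ k
        ≤ (((A.card : ℝ) * ∏ i, ((Y' i).card : ℝ))
            * ∑ s ∈ Y (Fin.last m), ∑ t ∈ Y (Fin.last m), ‖S s t‖) ^ k :=
          pow_le_pow_left₀ (sq_nonneg _) hT2 k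
      _ = ((A.card : ℝ) * ∏ i, ((Y' i).card : ℝ)) ^ k
            * (∑ s ∈ Y (Fin.last m), ∑ t ∈ Y (Fin.last m), ‖S s t‖) ^ k :=
          mul_pow _ _ _
      _ ≤ ((A.card : ℝ) * ∏ i, ((Y' i).card : ℝ)) ^ k
            * ((((Y (Fin.last m)).card : ℝ) * (Y (Fin.last m)).card) ^ (k - 1)
              * ∑ s ∈ Y (Fin.last m), ∑ t ∈ Y (Fin.last m), ‖S s t‖ ^ k) :=
          mul_le_mul_of_nonneg_left claimF
            (pow_nonneg (mul_nonneg (Nat.cast_nonneg _)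
              (Finset.prod_nonneg fun i _ => Nat.cast_nonneg _)) k)
      _ ≤ ((A.card : ℝ) * ∏ i, ((Y' i).card : ℝ)) ^ k
            * ((((Y (Fin.last m)).card : ℝ) * (Y (Fin.last m)).card) ^ (k - 1)
              * ∑ s ∈ Y (Fin.last m), ∑ t ∈ Y (Fin.last m),
                  (A.card : ℝ) ^ (k-1) * (∏ i, ((Y' i).card : ℝ)) ^ (k-2) * R s t) := by
          refine mul_le_mul_of_nonneg_left (mul_le_mul_of_nonneg_left ?_
              (pow_nonneg (mul_nonneg (Nat.cast_nonneg _) (Nat.cast_nonneg _)) _))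
            (pow_nonneg (mul_nonneg (Nat.cast_nonneg _)
              (Finset.prod_nonneg fun i _ => Nat.cast_nonneg _)) k)
          exact Finset.sum_le_sum fun s _ => Finset.sum_le_sum fun t _ => claimE s t
      _ = (A.card : ℝ) ^ (2*k - 1) * (∏ i : Fin (m+1), ((Y i).card : ℝ)) ^ (2*k - 2)
            * ∑ s ∈ Y (Fin.last m), ∑ t ∈ Y (Fin.last m), R s t := by
          have hpull : (∑ s ∈ Y (Fin.last m), ∑ t ∈ Y (Fin.last m),
                (A.card : ℝ) ^ (k-1) * (∏ i, ((Y' i).card : ℝ)) ^ (k-2) * R s t)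
              = ((A.card : ℝ) ^ (k-1) * (∏ i, ((Y' i).card : ℝ)) ^ (k-2))
                * ∑ s ∈ Y (Fin.last m), ∑ t ∈ Y (Fin.last m), R s t := by
            rw [Finset.mul_sum]
            exact Finset.sum_congr rfl fun s _ => (Finset.mul_sum _ _ _).symm
          rw [hpull, ← hcoef]
          ring

lemma prod_erase_zero {M : Type*} [CommMonoid M] {m : ℕ} (f : Fin (m+1) → M) :
    ∏ i ∈ Finset.univ.erase (0 : Fin (m+1)), f i = ∏ i : Fin m, f i.succ := by
  have h : Finset.univ.erase (0 : Fin (m+1)) = Finset.univ.image Fin.succ := by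
    ext j
    simp only [Finset.mem_erase, Finset.mem_univ, and_true, Finset.mem_image, true_and]
    constructor
    · intro hj
      obtain ⟨i, rfl⟩ := Fin.exists_succ_eq_of_ne_zero hj
      exact ⟨i, rfl⟩
    · rintro ⟨i, -, rfl⟩
      exact Fin.succ_ne_zero i
  rw [h, Finset.prod_image (fun a _ b _ h => Fin.succ_injective _ h)]

lemma sum_piFinset_cons' {M : Type*} [AddCommMonoid M] {F : Type*} [DecidableEq F] {m : ℕ}
    (Y : Fin (m+1) → Finset F) (f : (Fin (m+1) → F) → M) :
    ∑ x ∈ Fintype.piFinset Y, f x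
      = ∑ s ∈ Y 0, ∑ x ∈ Fintype.piFinset (fun i => Y i.succ), f (Fin.cons s x) := by
  rw [← Finset.sum_product']
  refine Finset.sum_bij' (fun x _ => ((x 0, fun i => x i.succ) : F × (Fin m → F)))
    (fun p _ => Fin.cons p.1 p.2) ?_ ?_ ?_ ?_ ?_
  · intro x hx
    simp only [Fintype.mem_piFinset] at hx
    simp [Finset.mem_product, Fintype.mem_piFinset, hx]
  · rintro ⟨s, x⟩ hp
    simp only [Finset.mem_product, Fintype.mem_piFinset] at hp ⊢
    intro i
    refine Fin.cases ?_ ?_ i <;> simp [hp.1, hp.2]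
  · intro x _; exact Fin.cons_self_tail x
  · rintro ⟨s, x⟩ _; simp
  · intro x _; simp only []; rw [show (fun i => x i.succ) = Fin.tail x from rfl, Fin.cons_self_tail x]

/-- Reduction of multilinear exponential sums with weights to sums over differences:
for `n ≥ 2`, sets `X₁, …, Xₙ ⊆ F_q`, an additive character `ψ` of `F_q`, and weights
`ωᵢ` bounded by `1`, each independent of the `i`-th coordinate,
`|T_ψ(X₁,…,Xₙ; ω₁,…,ωₙ)|^{2^{n−1}} ≤ X₁^{2^{n−1}−1}(X₂⋯Xₙ)^{2^{n−1}−2} ·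
  Σ_{x₂,y₂ ∈ X₂} ⋯ Σ_{xₙ,yₙ ∈ Xₙ} |Σ_{x₁ ∈ X₁} ψ(x₁(x₂−y₂)⋯(xₙ−yₙ))|`.
Here the index `0 : Fin n` plays the role of `1`, and the sums over
`x₂,y₂,…,xₙ,yₙ` are encoded as sums over `Fintype.piFinset` of the family that is
`{0}` at index `0` and `Xᵢ` elsewhere. -/
theorem multilinear_sum_reduction
    (F : Type*) [Field F] [Fintype F] [DecidableEq F]
    (n : ℕ) (hn : 2 ≤ n) [NeZero n]
    (ψ : AddChar F ℂ)
    (X : Fin n → Finset F) (ω : Fin n → (Fin n → F) → ℂ)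
    (hbd : ∀ i x, ‖ω i x‖ ≤ 1)
    (hindep : ∀ (i : Fin n) (x y : Fin n → F), (∀ j, j ≠ i → x j = y j) → ω i x = ω i y) :
    ‖∑ x ∈ Fintype.piFinset X, (∏ i, ω i x) * ψ (∏ i, x i)‖ ^ (2 ^ (n - 1)) ≤
      ((X 0).card : ℝ) ^ (2 ^ (n - 1) - 1) *
        (∏ i ∈ Finset.univ.erase (0 : Fin n), ((X i).card : ℝ)) ^ (2 ^ (n - 1) - 2) *
        ∑ x ∈ Fintype.piFinset (fun i => if i = 0 then ({0} : Finset F) else X i),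
          ∑ y ∈ Fintype.piFinset (fun i => if i = 0 then ({0} : Finset F) else X i),
            ‖∑ t ∈ X 0,
              ψ (t * ∏ i ∈ Finset.univ.erase (0 : Fin n), (x i - y i))‖ := by
  obtain ⟨m, rfl⟩ : ∃ m, n = m + 1 := ⟨n - 1, by omega⟩
  simp only [Nat.add_sub_cancel]
  have hL : (∑ x ∈ Fintype.piFinset X, (∏ i, ω i x) * ψ (∏ i, x i))
      = ∑ y ∈ Fintype.piFinset (fun i : Fin m => X i.succ), ∑ a ∈ X 0,
          (ω 0 (Fin.cons 0 y)) * (∏ i : Fin m, ω i.succ (Fin.cons a y))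
            * ψ (a * ∏ i, y i) := by
    rw [sum_piFinset_cons' X,
      Finset.sum_comm (s := X 0) (t := Fintype.piFinset (fun i : Fin m => X i.succ))]
    refine Finset.sum_congr rfl fun y _ => Finset.sum_congr rfl fun a _ => ?_
    have h1 : ω 0 (Fin.cons a y) = ω 0 (Fin.cons 0 y) := by
      refine hindep 0 _ _ ?_
      intro j hj
      obtain ⟨i, rfl⟩ := Fin.exists_succ_eq_of_ne_zero hj
      simp
    rw [Fin.prod_univ_succ (f := fun i => ω i (Fin.cons a y)),
      Fin.prod_univ_succ (f := fun i : Fin (m+1) => (Fin.cons a y : Fin (m+1) → F) i)]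
    simp only [Fin.cons_zero, Fin.cons_succ]
    rw [h1]
  have hind3 : ∀ (i : Fin m) (a : F) (y z : Fin m → F), (∀ j, j ≠ i → y j = z j) →
      (fun (i : Fin m) (a : F) (y : Fin m → F) => ω i.succ (Fin.cons a y)) i a y
        = (fun (i : Fin m) (a : F) (y : Fin m → F) => ω i.succ (Fin.cons a y)) i a z := by
    intro i a y z h
    simp only []
    refine hindep i.succ _ _ ?_
    intro j hj
    rcases Fin.eq_zero_or_eq_succ j with rfl | ⟨j', rfl⟩
    · simp
    · simp only [Fin.cons_succ]
      exact h j' fun e => hj (by rw [e])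
  have hkey := key_lemma F m ψ (X 0) (fun i => X i.succ)
    (fun y => ω 0 (Fin.cons 0 y)) (fun i a y => ω i.succ (Fin.cons a y))
    (fun y => hbd 0 _) (fun i a y => hbd i.succ _) hind3
  rw [hL]
  rw [prod_erase_zero (f := fun i => ((X i).card : ℝ))]
  have hsum2 : (∑ x ∈ Fintype.piFinset (fun i : Fin (m+1) => if i = 0 then ({0}:Finset F) else X i),
        ∑ y ∈ Fintype.piFinset (fun i : Fin (m+1) => if i = 0 then ({0}:Finset F) else X i),
          ‖∑ t ∈ X 0, ψ (t * ∏ i ∈ Finset.univ.erase (0 : Fin (m+1)), (x i - y i))‖)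
      = ∑ y ∈ Fintype.piFinset (fun i : Fin m => X i.succ),
          ∑ z ∈ Fintype.piFinset (fun i : Fin m => X i.succ),
            ‖∑ a ∈ X 0, ψ (a * ∏ i, (y i - z i))‖ := by
    have hred : Fintype.piFinset (fun i : Fin m =>
          if i.succ = (0:Fin (m+1)) then ({0}:Finset F) else X i.succ)
        = Fintype.piFinset (fun i : Fin m => X i.succ) := by
      exact congrArg (fun (t : Fin m → Finset F) => Fintype.piFinset t)
        (funext fun i => if_neg (Fin.succ_ne_zero i))
    rw [sum_piFinset_cons' (fun i : Fin (m+1) => if i = 0 then ({0}:Finset F) else X i)]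
    simp only [eq_self_iff_true, if_true, Finset.sum_singleton, hred]
    refine Finset.sum_congr rfl fun y _ => ?_
    rw [sum_piFinset_cons' (fun i : Fin (m+1) => if i = 0 then ({0}:Finset F) else X i)]
    simp only [eq_self_iff_true, if_true, Finset.sum_singleton, hred]
    refine Finset.sum_congr rfl fun z _ => ?_
    congr 1
    refine Finset.sum_congr rfl fun t _ => ?_
    congr 1
    rw [prod_erase_zero (f := fun i : Fin (m+1) =>
      (Fin.cons 0 y : Fin (m+1) → F) i - (Fin.cons 0 z : Fin (m+1) → F) i)]
    simp [Fin.cons_succ]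
  rw [hsum2]
  exact hkey
end

section
/- There is an absolute constant c₀ > 0 such that for any prime power q and any sets A, B, C, D ⊆ F_q^* of cardinalities A, B, C, D respectively with A·B·C·D ≥ c₀ q³, one has AB + C + D = F_q. -/
set_option linter.unusedSectionVars false
set_option maxHeartbeats 1000000

open scoped Pointwise
open Finset

namespace ProdAddAux

variable {F : Type} [Field F] [Fintype F] [DecidableEq F]

noncomputable def ψ (F : Type) [Field F] [Fintype F] : AddChar F ℂ :=
  AddChar.FiniteField.primitiveChar_to_Complex F

lemma hchar (F : Type) [Field F] [Fintype F] : 0 < ringChar F :=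
  Nat.pos_of_ne_zero (CharP.ringChar_ne_zero_of_finite F)

lemma orth (y : F) : ∑ t : F, ψ F (t * y) = if y = 0 then (Fintype.card F : ℂ) else 0 := by
  unfold ψ
  rw [AddChar.sum_mulShift y (AddChar.FiniteField.primitiveChar_to_Complex_isPrimitive F)]
  split_ifs <;> simp

lemma orth' (y : F) : ∑ t : F, ψ F (y * t) = if y = 0 then (Fintype.card F : ℂ) else 0 := by
  simp_rw [mul_comm y]; exact orth y

lemma conj_psi (y : F) : (starRingEnd ℂ) (ψ F y) = ψ F (-y) := by
  rw [AddChar.starComp_apply (hchar F)]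
  exact AddChar.inv_apply _ y

lemma norm_psi (y : F) : ‖ψ F y‖ = 1 := by
  have h := Complex.mul_conj (ψ F y)
  rw [conj_psi, ← AddChar.map_add_eq_mul, add_neg_cancel, AddChar.map_zero_eq_one] at h
  have h2 : Complex.normSq (ψ F y) = 1 := by exact_mod_cast h.symm
  have h3 : ‖ψ F y‖ ^ 2 = 1 := by
    rw [Complex.sq_norm]
    exact h2
  nlinarith [norm_nonneg (ψ F y)]

/-- Parseval-type identity. -/
lemma parseval (g : F → F) (S : Finset F) (hg : Set.InjOn g S) :
    ∑ t : F, ‖∑ c ∈ S, ψ F (g c * t)‖ ^ 2 = (Fintype.card F : ℝ) * S.card := by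
  have key : ∑ t : F, ((∑ c ∈ S, ψ F (g c * t)) * (starRingEnd ℂ) (∑ c ∈ S, ψ F (g c * t)))
      = ((Fintype.card F : ℂ) * S.card) := by
    have expand : ∀ t : F, (∑ c ∈ S, ψ F (g c * t)) * (starRingEnd ℂ) (∑ c ∈ S, ψ F (g c * t))
        = ∑ c ∈ S, ∑ c' ∈ S, ψ F ((g c - g c') * t) := by
      intro t
      rw [map_sum, Finset.sum_mul_sum]
      refine Finset.sum_congr rfl fun c _ => Finset.sum_congr rfl fun c' _ => ?_
      rw [conj_psi, ← AddChar.map_add_eq_mul]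
      ring_nf
    simp_rw [expand]
    rw [Finset.sum_comm]
    have step : ∀ c ∈ S, ∑ c' ∈ S, ∑ t : F, ψ F ((g c - g c') * t)
        = (Fintype.card F : ℂ) := by
      intro c hc
      have h1 : ∀ c' ∈ S, ∑ t : F, ψ F ((g c - g c') * t)
          = if c' = c then (Fintype.card F : ℂ) else 0 := by
        intro c' hc'
        rw [orth']
        by_cases h : c' = c
        · simp [h]
        · rw [if_neg h, if_neg]
          intro hz
          exact h (hg hc' hc (sub_eq_zero.mp hz).symm)
      rw [Finset.sum_congr rfl h1, Finset.sum_ite_eq' S c (fun _ => (Fintype.card F : ℂ)),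
        if_pos hc]
    have step2 : ∀ c ∈ S, ∑ t : F, ∑ c' ∈ S, ψ F ((g c - g c') * t) = (Fintype.card F : ℂ) :=
      fun c hc => by rw [Finset.sum_comm]; exact step c hc
    rw [Finset.sum_congr rfl step2, Finset.sum_const, nsmul_eq_mul, mul_comm]
  have lhs : ((∑ t : F, ‖∑ c ∈ S, ψ F (g c * t)‖ ^ 2 : ℝ) : ℂ)
      = ∑ t : F, ((∑ c ∈ S, ψ F (g c * t)) * (starRingEnd ℂ) (∑ c ∈ S, ψ F (g c * t))) := by
    push_cast
    refine Finset.sum_congr rfl fun t _ => ?_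
    rw [Complex.mul_conj, Complex.normSq_eq_norm_sq]
    norm_cast
  have := lhs.trans key
  exact_mod_cast this


lemma exists_rep (A B C D : Finset F)
    (h : 2 * (Fintype.card F : ℝ) ^ 3 ≤ A.card * B.card * C.card * D.card) (x : F) :
    ∃ a ∈ A, ∃ b ∈ B, ∃ c ∈ C, ∃ d ∈ D, a * b + c + d = x := by
  by_contra hcon
  push_neg at hcon
  set qR : ℝ := (Fintype.card F : ℝ) with hqR
  have hq1 : (1 : ℝ) ≤ qR := by
    rw [hqR]; exact_mod_cast Fintype.card_pos
  set aR : ℝ := (A.card : ℝ)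
  set bR : ℝ := (B.card : ℝ)
  set cR : ℝ := (C.card : ℝ)
  set dR : ℝ := (D.card : ℝ)
  set P : ℝ := aR * bR * cR * dR with hPdef
  have hP : 2 * qR ^ 3 ≤ P := h
  have haR : (0:ℝ) ≤ aR := Nat.cast_nonneg _
  have hbR : (0:ℝ) ≤ bR := Nat.cast_nonneg _
  have hcR : (0:ℝ) ≤ cR := Nat.cast_nonneg _
  have hdR : (0:ℝ) ≤ dR := Nat.cast_nonneg _
  set T : F → ℂ := fun t => ∑ a ∈ A, ∑ b ∈ B, ψ F (a * b * t) with hT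
  set Cf : F → ℂ := fun t => ∑ c ∈ C, ψ F (c * t) with hCf
  set Df : F → ℂ := fun t => ∑ d ∈ D, ψ F (d * t) with hDf
  set G : F → ℂ := fun t => T t * (Cf t * (Df t * ψ F (-(x * t)))) with hG
  -- factorization
  have hfact : ∀ t : F,
      ∑ a ∈ A, ∑ b ∈ B, ∑ c ∈ C, ∑ d ∈ D, ψ F ((a * b + c + d - x) * t) = G t := by
    intro t
    have hpt : ∀ a b c d : F, ψ F ((a * b + c + d - x) * t)
        = ψ F (a * b * t) * (ψ F (c * t) * (ψ F (d * t) * ψ F (-(x * t)))) := by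
      intro a b c d
      rw [show (a * b + c + d - x) * t = a * b * t + (c * t + (d * t + -(x * t))) by ring]
      simp only [AddChar.map_add_eq_mul]
    simp_rw [hpt, ← Finset.mul_sum, ← Finset.sum_mul]
    try simp only [hG, hT, hCf, hDf]
    try ring
  -- the total sum vanishes
  have hSzero : ∑ t : F, G t = 0 := by
    calc ∑ t : F, G t
        = ∑ t : F, ∑ a ∈ A, ∑ b ∈ B, ∑ c ∈ C, ∑ d ∈ D, ψ F ((a * b + c + d - x) * t) :=
          Finset.sum_congr rfl fun t _ => (hfact t).symm
      _ = ∑ a ∈ A, ∑ b ∈ B, ∑ c ∈ C, ∑ d ∈ D, ∑ t : F, ψ F ((a * b + c + d - x) * t) := by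
          rw [Finset.sum_comm]
          refine Finset.sum_congr rfl fun a _ => ?_
          rw [Finset.sum_comm]
          refine Finset.sum_congr rfl fun b _ => ?_
          rw [Finset.sum_comm]
          refine Finset.sum_congr rfl fun c _ => ?_
          rw [Finset.sum_comm]
      _ = 0 := by
          refine Finset.sum_eq_zero fun a ha => Finset.sum_eq_zero fun b hb => ?_
          refine Finset.sum_eq_zero fun c hc => Finset.sum_eq_zero fun d hd => ?_
          rw [orth', if_neg]
          intro hz
          exact hcon a ha b hb c hc d hd (sub_eq_zero.mp hz)
  -- value at 0
  have hG0 : ‖G 0‖ = P := by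
    have h0 : G 0 = ((A.card * B.card * C.card * D.card : ℕ) : ℂ) := by
      simp only [hG, hT, hCf, hDf]
      simp [mul_zero, AddChar.map_zero_eq_one]
      push_cast
      ring
    rw [h0, Complex.norm_natCast, hPdef]
    push_cast
    ring
  -- norms of factors
  have hnormG : ∀ t : F, ‖G t‖ = ‖T t‖ * (‖Cf t‖ * ‖Df t‖) := by
    intro t
    simp [hG, norm_mul, norm_psi]
  -- bilinear bound
  have hTb : ∀ t : F, t ≠ 0 → ‖T t‖ ≤ Real.sqrt (qR * aR * bR) := by
    intro t ht
    have step1 : ‖T t‖ ≤ ∑ a ∈ A, ‖∑ b ∈ B, ψ F (a * b * t)‖ := norm_sum_le _ _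
    have step2 : (∑ a ∈ A, ‖∑ b ∈ B, ψ F (a * b * t)‖) ^ 2
        ≤ aR * ∑ a ∈ A, ‖∑ b ∈ B, ψ F (a * b * t)‖ ^ 2 := by
      have := Finset.sum_mul_sq_le_sq_mul_sq A (fun _ => (1:ℝ))
        (fun a => ‖∑ b ∈ B, ψ F (a * b * t)‖)
      simpa using this
    have step3 : ∑ a ∈ A, ‖∑ b ∈ B, ψ F (a * b * t)‖ ^ 2
        ≤ ∑ a : F, ‖∑ b ∈ B, ψ F (a * b * t)‖ ^ 2 :=
      Finset.sum_le_sum_of_subset_of_nonneg (Finset.subset_univ A)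
        fun _ _ _ => sq_nonneg _
    have step4 : ∑ a : F, ‖∑ b ∈ B, ψ F (a * b * t)‖ ^ 2 = qR * bR := by
      have harg : ∀ a : F, (∑ b ∈ B, ψ F (a * b * t)) = ∑ b ∈ B, ψ F ((b * t) * a) := by
        intro a
        refine Finset.sum_congr rfl fun b _ => ?_
        congr 1
        ring
      simp_rw [harg]
      exact parseval (fun b => b * t) B fun u _ v _ huv => mul_right_cancel₀ ht huv
    refine Real.le_sqrt_of_sq_le ?_
    have h1 : ‖T t‖ ^ 2 ≤ (∑ a ∈ A, ‖∑ b ∈ B, ψ F (a * b * t)‖) ^ 2 :=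
      pow_le_pow_left₀ (norm_nonneg _) step1 2
    calc ‖T t‖ ^ 2 ≤ aR * ∑ a ∈ A, ‖∑ b ∈ B, ψ F (a * b * t)‖ ^ 2 := h1.trans step2
      _ ≤ aR * (qR * bR) := mul_le_mul_of_nonneg_left (step3.trans_eq step4) haR
      _ = qR * aR * bR := by ring
  -- Cauchy-Schwarz for C, D transforms
  have hCD : ∑ t : F, ‖Cf t‖ * ‖Df t‖ ≤ Real.sqrt (qR * cR * (qR * dR)) := by
    have hparsC : ∑ t : F, ‖Cf t‖ ^ 2 = qR * cR := by
      have := parseval (id : F → F) C Function.injective_id.injOn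
      simpa [hCf] using this
    have hparsD : ∑ t : F, ‖Df t‖ ^ 2 = qR * dR := by
      have := parseval (id : F → F) D Function.injective_id.injOn
      simpa [hDf] using this
    have hcs := Finset.sum_mul_sq_le_sq_mul_sq Finset.univ (fun t => ‖Cf t‖) (fun t => ‖Df t‖)
    rw [hparsC, hparsD] at hcs
    exact Real.le_sqrt_of_sq_le hcs
  -- error bound
  set E : ℝ := Real.sqrt (qR * aR * bR) * Real.sqrt (qR * cR * (qR * dR)) with hE
  have herr : ‖∑ t ∈ Finset.univ.erase (0:F), G t‖ ≤ E := by
    calc ‖∑ t ∈ Finset.univ.erase (0:F), G t‖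
        ≤ ∑ t ∈ Finset.univ.erase (0:F), ‖G t‖ := norm_sum_le _ _
      _ ≤ ∑ t ∈ Finset.univ.erase (0:F), Real.sqrt (qR * aR * bR) * (‖Cf t‖ * ‖Df t‖) := by
          refine Finset.sum_le_sum fun t htm => ?_
          rw [hnormG t]
          refine mul_le_mul_of_nonneg_right (hTb t (Finset.ne_of_mem_erase htm)) ?_
          exact mul_nonneg (norm_nonneg _) (norm_nonneg _)
      _ = Real.sqrt (qR * aR * bR) * ∑ t ∈ Finset.univ.erase (0:F), ‖Cf t‖ * ‖Df t‖ := by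
          rw [Finset.mul_sum]
      _ ≤ Real.sqrt (qR * aR * bR) * ∑ t : F, ‖Cf t‖ * ‖Df t‖ := by
          refine mul_le_mul_of_nonneg_left ?_ (Real.sqrt_nonneg _)
          refine Finset.sum_le_sum_of_subset_of_nonneg (Finset.erase_subset _ _)
            fun _ _ _ => mul_nonneg (norm_nonneg _) (norm_nonneg _)
      _ ≤ E := mul_le_mul_of_nonneg_left hCD (Real.sqrt_nonneg _)
  -- assemble
  have hsplit : G 0 + ∑ t ∈ Finset.univ.erase (0:F), G t = 0 := by
    rw [Finset.add_sum_erase _ G (Finset.mem_univ 0)]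
    exact hSzero
  have hPE : P ≤ E := by
    have : G 0 = -∑ t ∈ Finset.univ.erase (0:F), G t := by linear_combination hsplit
    calc P = ‖G 0‖ := hG0.symm
      _ = ‖∑ t ∈ Finset.univ.erase (0:F), G t‖ := by rw [this, norm_neg]
      _ ≤ E := herr
  -- final contradiction
  have hE2 : E ^ 2 = qR ^ 3 * P := by
    rw [hE, mul_pow, Real.sq_sqrt (by positivity), Real.sq_sqrt (by positivity)]
    rw [hPdef]
    ring
  have hq3 : (0:ℝ) < qR ^ 3 := by positivity
  have hPpos : (0:ℝ) < P := by nlinarith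
  have hEP : P ^ 2 ≤ E ^ 2 := by nlinarith [hPE, hPpos]
  nlinarith [mul_le_mul_of_nonneg_right hP hPpos.le, mul_pos hq3 hPpos, hE2, hEP]

end ProdAddAux
/-- If `A·B·C·D ≥ c₀ q³` for sets `A, B, C, D ⊆ F_q^*` then `AB + C + D = F_q`. -/
theorem product_add_add_eq_univ :
    ∃ c₀ : ℝ, 0 < c₀ ∧
      ∀ (F : Type) [Field F] [Fintype F] [DecidableEq F] (A B C D : Finset F),
        (∀ a ∈ A, a ≠ 0) → (∀ b ∈ B, b ≠ 0) → (∀ c ∈ C, c ≠ 0) → (∀ d ∈ D, d ≠ 0) →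
        c₀ * (Fintype.card F : ℝ) ^ (3 : ℕ) ≤
          (A.card : ℝ) * (B.card : ℝ) * (C.card : ℝ) * (D.card : ℝ) →
        A * B + C + D = (Finset.univ : Finset F) := by
  refine ⟨2, by norm_num, ?_⟩
  intro F _ _ _ A B C D _ _ _ _ hcard
  apply Finset.eq_univ_of_forall
  intro x
  obtain ⟨a, ha, b, hb, c, hc, d, hd, habcd⟩ :=
    ProdAddAux.exists_rep A B C D hcard x
  rw [← habcd]
  exact Finset.add_mem_add (Finset.add_mem_add (Finset.mul_mem_mul ha hb) hc) hd
end
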